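/- arXiv:2110.06158 — 3 statements merged into one kernel-verified Lean document; each statement's English description precedes it below -/
import Mathlib

section
/- For p = 2^n with n ≥ 3, let τ be the permutation of {1,…,p} that interchanges i and i + p/2 for each i ≤ p/2. Then applying τ simultaneously to the rows and columns of M_p only interchanges the entries n+1 and −(n+1): for all i and j, M_p[τ(i), τ(j)] = M_p[i,j] whenever |j−i| ≠ p/2, and M_p[τ(i), τ(j)] = −M_p[i,j] whenever |j−i| = p/2; the same statements hold with M_p replaced by M_p^*. -/
/-- The matrix `M₄` (1-indexed). -/
def M4 (i j : ℕ) : ℤ :=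
  (([[0,1,2,3],[-1,0,3,-2],[-2,-3,0,1],[-3,2,-1,0]] : List (List ℤ)).getD (i-1) []).getD (j-1) 0

/-- The matrix `M₄*` (1-indexed). -/
def M4s (i j : ℕ) : ℤ :=
  (([[0,-2,-3,-1],[2,0,1,-3],[3,-1,0,2],[1,3,-2,0]] : List (List ℤ)).getD (i-1) []).getD (j-1) 0

/-- For block-index difference `d`, `blockSC d = (s, c)` means that the corresponding
4×4 block of `M_p` is `s·M₄ + c·I` (and the block of `M_p*` is `s·M₄* − c·I`):
`(1,0)` if `d = 0`; `(-1,4)` if `d ≡ 1 (mod 4)`; `(-1,-4)` if `d ≡ -1 (mod 4)`;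
`(1, x+4)` if `d = y·2^x`, `x ≥ 1`, `y ≡ 1 (mod 4)`;
`(1, -(x+4))` if `d = y·2^x`, `x ≥ 1`, `y ≡ -1 (mod 4)`. -/
def blockSC (d : ℤ) : ℤ × ℤ :=
  if d = 0 then (1, 0)
  else if d % 4 = 1 then (-1, 4)
  else if d % 4 = 3 then (-1, -4)
  else
    let x : ℕ := d.natAbs.factorization 2
    if (d / (2:ℤ)^x) % 4 = 1 then (1, (x:ℤ) + 4) else (1, -((x:ℤ) + 4))

/-- Entry `(i,j)` (1-indexed) of `M_p`, for any `p = 2^n ≥ 4` and `1 ≤ i,j ≤ p`;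
the defining block formula depends only on `i` and `j`, not on `p`. -/
def Ment (i j : ℕ) : ℤ :=
  let d : ℤ := (((j-1)/4 : ℕ) : ℤ) - (((i-1)/4 : ℕ) : ℤ)
  (blockSC d).1 * M4 ((i-1) % 4 + 1) ((j-1) % 4 + 1)
    + (if (i-1) % 4 = (j-1) % 4 then (blockSC d).2 else 0)

/-- Entry `(i,j)` (1-indexed) of `M_p*`. -/
def Ments (i j : ℕ) : ℤ :=
  let d : ℤ := (((j-1)/4 : ℕ) : ℤ) - (((i-1)/4 : ℕ) : ℤ)
  (blockSC d).1 * M4s ((i-1) % 4 + 1) ((j-1) % 4 + 1)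
    + (if (i-1) % 4 = (j-1) % 4 then -(blockSC d).2 else 0)

/-- The `p × p` matrix `M_p`, `p = 2^n`, as a function on 1-based indices
(entries outside the index range `1,…,p` are set to `0`). -/
def Mp (n i j : ℕ) : ℤ :=
  if 1 ≤ i ∧ i ≤ 2^n ∧ 1 ≤ j ∧ j ≤ 2^n then Ment i j else 0

/-- The `p × p` matrix `M_p*`, `p = 2^n`, as a function on 1-based indices. -/
def Mps (n i j : ℕ) : ℤ :=
  if 1 ≤ i ∧ i ≤ 2^n ∧ 1 ≤ j ∧ j ≤ 2^n then Ments i j else 0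

/-- The base mappings `σ_{4,k}` : `sigma4 k i = σ_{4,k}(i)` (value `0` at the
undefined point `i = k`). -/
def sigma4 (k i : ℕ) : ℕ :=
  (([[0,4,2,3],[3,0,4,1],[4,1,0,2],[2,3,1,0]] : List (List ℕ)).getD (k-1) []).getD (i-1) 0

/-- The mappings `σ_{p,k}` for `p = 2^n`: `sigma n k i = σ_{2^n, k}(i)`
(value `0` at the undefined point `i = k`, and junk values for `n < 2`). -/
def sigma : ℕ → ℕ → ℕ → ℕ
  | 0, _, _ => 0
  | 1, _, _ => 0
  | 2, k, i => sigma4 k i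
  | n+3, k, i =>
    let P := 2^(n+2)
    if k ≤ P then
      if i = k + P then i
      else if i ≤ P then sigma (n+2) k i + P
      else sigma (n+2) k (i - P)
    else
      if i = k - P then i
      else if i ≤ P then sigma (n+2) (k - P) i + P
      else sigma (n+2) (k - P) (i - P)

lemma blockSC_odd (x : ℕ) (y : ℤ) (hy : ¬ (2:ℤ) ∣ y) :
    blockSC (y * 2^x) =
      if y % 4 = 1 then (if x = 0 then ((-1:ℤ),(4:ℤ)) else (1, (x:ℤ)+4))
      else (if x = 0 then ((-1:ℤ),(-4:ℤ)) else (1, -((x:ℤ)+4))) := by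
  have hy0 : y ≠ 0 := by rintro rfl; exact hy ⟨0, rfl⟩
  have hy4 : y % 4 = 1 ∨ y % 4 = 3 := by omega
  have hd0 : y * 2^x ≠ 0 := mul_ne_zero hy0 (by positivity)
  have hfact : (y * 2^x).natAbs.factorization 2 = x := by
    rw [Int.natAbs_mul, Int.natAbs_pow]
    show (y.natAbs * 2 ^ x).factorization 2 = x
    rw [Nat.factorization_mul (Int.natAbs_ne_zero.2 hy0) (by positivity),
      Nat.Prime.factorization_pow Nat.prime_two]
    have hnd : ¬ (2 ∣ y.natAbs) := by
      intro h
      exact hy (Int.natAbs_dvd_natAbs.mp (by simpa using h))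
    simp [Nat.factorization_eq_zero_of_not_dvd hnd]
  have hdiv : (y * 2^x) / (2:ℤ)^x = y := Int.mul_ediv_cancel _ (by positivity)
  unfold blockSC
  rcases Nat.eq_zero_or_pos x with hx | hx
  · subst hx
    simp only [pow_zero, mul_one] at hd0 hdiv ⊢
    rcases hy4 with h | h <;> simp [h, hd0]
  · have h2d : (2:ℤ) ∣ y * 2^x := ⟨y * 2^(x-1), by
      rw [mul_comm (2:ℤ), mul_assoc, ← pow_succ]
      congr 2
      omega⟩
    have h1 : (y * 2^x) % 4 ≠ 1 := by omega
    have h3 : (y * 2^x) % 4 ≠ 3 := by omega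
    have hx0 : x ≠ 0 := by omega
    simp only [hd0, h1, h3, if_false, hfact, hdiv]
    rcases hy4 with h | h <;> simp [h, hx0]

lemma exists_odd_decomp (d : ℤ) (hd : d ≠ 0) : ∃ x y, ¬ (2:ℤ) ∣ y ∧ d = y * 2^x := by
  obtain ⟨k, m, hm, he⟩ := Nat.exists_eq_two_pow_mul_odd (Int.natAbs_ne_zero.2 hd)
  have hmd : ¬ (2:ℤ) ∣ (m:ℤ) := by
    rcases hm with ⟨t, ht⟩; omega
  rcases Int.natAbs_eq d with h | h
  · exact ⟨k, m, hmd, by rw [h, he]; push_cast; ring⟩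
  · refine ⟨k, -m, by simpa using hmd, ?_⟩
    rw [h, he]; push_cast; ring

lemma blockSC_neg (d : ℤ) (hd : d ≠ 0) :
    blockSC (-d) = ((blockSC d).1, -(blockSC d).2) := by
  obtain ⟨x, y, hy, rfl⟩ := exists_odd_decomp d hd
  have h2 : -(y * 2^x) = (-y) * 2^x := by ring
  rw [h2, blockSC_odd x y hy, blockSC_odd x (-y) (by simpa using hy)]
  have hy4 : y % 4 = 1 ∨ y % 4 = 3 := by omega
  rcases hy4 with h | h
  · have h' : (-y) % 4 ≠ 1 := by omega
    rcases Nat.eq_zero_or_pos x with hx | hx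
    · simp [h, h', hx]
    · simp [h, h', Nat.pos_iff_ne_zero.mp hx]
  · have h' : (-y) % 4 = 1 := by omega
    have h1 : y % 4 ≠ 1 := by omega
    rcases Nat.eq_zero_or_pos x with hx | hx
    · simp [h1, h', hx]
    · simp [h1, h', Nat.pos_iff_ne_zero.mp hx]

lemma blockSC_sub (t : ℕ) (ht : 1 ≤ t) (d : ℤ) (h1 : 1 ≤ d) (h2 : d < 2^t)
    (h3 : d ≠ 2^(t-1)) : blockSC (d - 2^t) = blockSC d := by
  obtain ⟨x, y, hy, rfl⟩ := exists_odd_decomp d (by omega)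
  have hxpow : (0:ℤ) < 2^x := by positivity
  have hy1 : 1 ≤ y := by nlinarith
  have hxd : (2:ℤ)^x ≤ y * 2^x := by nlinarith
  have hxt : x < t := by
    by_contra h
    push_neg at h
    have : (2:ℤ)^t ≤ 2^x := pow_le_pow_right₀ (by norm_num) h
    omega
  have hxt2 : x + 2 ≤ t := by
    rcases Nat.lt_or_ge (x+2) (t+1) with h | h
    · omega
    · exfalso
      have hx : x = t - 1 := by omega
      have : y = 1 := by
        by_contra hy1'
        have : 3 ≤ y := by omega
        have h3' : 3 * 2^x ≤ y * 2^x := by nlinarith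
        have h4 : (2:ℤ)^t = 2 * 2^x := by rw [hx, ← pow_succ']; congr 1; omega
        nlinarith
      apply h3
      rw [this, hx]; ring
  have hkey : y * 2^x - 2^t = (y - 2^(t-x)) * 2^x := by
    have : (2:ℤ)^t = 2^(t-x) * 2^x := by rw [← pow_add]; congr 1; omega
    rw [this]; ring
  have h4d : (4:ℤ) ∣ 2^(t-x) := by
    have h44 : (4:ℤ) = 2^2 := by norm_num
    rw [h44]
    exact pow_dvd_pow 2 (by omega)
  have hy' : ¬ (2:ℤ) ∣ (y - 2^(t-x)) := by
    intro h
    have : (2:ℤ) ∣ 2^(t-x) := dvd_pow_self 2 (by omega)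
    exact hy (by omega)
  rw [hkey, blockSC_odd x _ hy', blockSC_odd x y hy]
  have hm : (y - 2^(t-x)) % 4 = y % 4 := by omega
  rw [hm]

lemma blockSC_add (t : ℕ) (ht : 1 ≤ t) (d : ℤ) (h1 : d ≤ -1) (h2 : -(2^t) < d)
    (h3 : d ≠ -(2^(t-1))) : blockSC (d + 2^t) = blockSC d := by
  have key := blockSC_sub t ht (-d) (by omega) (by omega) (by intro h; apply h3; omega)
  have h4 : -d - 2^t ≠ 0 := by
    have : (0:ℤ) < 2^t := by positivity
    omega
  have he : d + 2^t = -(-d - 2^t) := by ring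
  rw [he, blockSC_neg _ h4, key, blockSC_neg d (by omega)]
  simp

lemma M4_diag : ∀ r < 4, M4 (r+1) (r+1) = 0 ∧ M4s (r+1) (r+1) = 0 := by decide

lemma Ment_pair (i j i' j' : ℕ)
    (hri : (i'-1)%4 = (i-1)%4) (hrj : (j'-1)%4 = (j-1)%4)
    (hb : blockSC ((((j'-1)/4 : ℕ):ℤ) - (((i'-1)/4 : ℕ):ℤ))
        = blockSC ((((j-1)/4 : ℕ):ℤ) - (((i-1)/4 : ℕ):ℤ))) :
    Ment i' j' = Ment i j ∧ Ments i' j' = Ments i j := by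
  simp only [Ment, Ments, hri, hrj, hb]
  exact ⟨trivial, trivial⟩

lemma Ment_pair_offdiag (i j i' j' : ℕ) (hr : (i-1)%4 ≠ (j-1)%4)
    (hri : (i'-1)%4 = (i-1)%4) (hrj : (j'-1)%4 = (j-1)%4)
    (hs : (blockSC ((((j'-1)/4 : ℕ):ℤ) - (((i'-1)/4 : ℕ):ℤ))).1
        = (blockSC ((((j-1)/4 : ℕ):ℤ) - (((i-1)/4 : ℕ):ℤ))).1) :
    Ment i' j' = Ment i j ∧ Ments i' j' = Ments i j := by
  simp only [Ment, Ments, hri, hrj, hs, if_neg hr]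
  exact ⟨trivial, trivial⟩

lemma Ment_pair_neg (i j i' j' : ℕ) (hr : (i-1)%4 = (j-1)%4)
    (hri : (i'-1)%4 = (i-1)%4) (hrj : (j'-1)%4 = (j-1)%4)
    (hs : (blockSC ((((j'-1)/4 : ℕ):ℤ) - (((i'-1)/4 : ℕ):ℤ))).1
        = (blockSC ((((j-1)/4 : ℕ):ℤ) - (((i-1)/4 : ℕ):ℤ))).1)
    (hc : (blockSC ((((j'-1)/4 : ℕ):ℤ) - (((i'-1)/4 : ℕ):ℤ))).2
        = -(blockSC ((((j-1)/4 : ℕ):ℤ) - (((i-1)/4 : ℕ):ℤ))).2) :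
    Ment i' j' = -(Ment i j) ∧ Ments i' j' = -(Ments i j) := by
  obtain ⟨h1, h2⟩ := M4_diag ((i-1)%4) (Nat.mod_lt _ (by norm_num))
  rw [hr] at h1 h2
  simp only [Ment, Ments, hri, hrj, hr, if_pos rfl, h1, h2, hs, hc]
  constructor <;> simp

/-- For `p = 2^n` with `n ≥ 3`, let `τ` interchange `i` and `i + p/2`
for each `i ≤ p/2`. Applying `τ` to rows and columns of `M_p` (or `M_p*`) only
interchanges the entries `n+1` and `−(n+1)`: `M_p[τ(i), τ(j)] = M_p[i,j]` when
`|j−i| ≠ p/2`, and `M_p[τ(i), τ(j)] = −M_p[i,j]` when `|j−i| = p/2`. -/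
theorem stmt16 (n p : ℕ) (hn : 3 ≤ n) (hp : p = 2^n)
    (i j : ℕ) (hi1 : 1 ≤ i) (hi2 : i ≤ p) (hj1 : 1 ≤ j) (hj2 : j ≤ p) :
    let τ : ℕ → ℕ := fun m => if m ≤ p/2 then m + p/2 else m - p/2
    (((j:ℤ) - (i:ℤ)).natAbs ≠ p/2 →
      Mp n (τ i) (τ j) = Mp n i j ∧ Mps n (τ i) (τ j) = Mps n i j) ∧
    (((j:ℤ) - (i:ℤ)).natAbs = p/2 →
      Mp n (τ i) (τ j) = -(Mp n i j) ∧ Mps n (τ i) (τ j) = -(Mps n i j)) := by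
  intro τ
  have hτ : ∀ m, τ m = if m ≤ p/2 then m + p/2 else m - p/2 := fun _ => rfl
  subst hp
  set E := 2^(n-3) with hE
  have hE1 : 1 ≤ E := Nat.one_le_two_pow
  have hp8 : 2^n = 8 * E := by
    rw [show n = (n-3)+3 by omega, pow_succ, pow_succ, pow_succ]
    omega
  have hH : 2^n / 2 = 4 * E := by omega
  have hcastE : ((E:ℕ):ℤ) = 2^(n-3) := by rw [hE]; push_cast; ring
  have hQE : ((2:ℤ))^(n-2) = 2*(E:ℤ) := by
    rw [show n-2 = (n-3)+1 by omega, pow_succ, ← hcastE]; ring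
  have hQE' : ((2:ℤ))^(n-2-1) = (E:ℤ) := by
    rw [show n-2-1 = n-3 by omega, ← hcastE]
  have hEne : ((E:ℕ):ℤ) ≠ 0 := by positivity
  have hMp : ∀ a b, 1 ≤ a → a ≤ 8*E → 1 ≤ b → b ≤ 8*E →
      Mp n a b = Ment a b ∧ Mps n a b = Ments a b := by
    intro a b h1 h2 h3 h4
    rw [Mp, Mps, if_pos ⟨h1, by omega, h3, by omega⟩, if_pos ⟨h1, by omega, h3, by omega⟩]
    exact ⟨rfl, rfl⟩
  simp only [hτ, hH]
  rw [hp8] at hi2 hj2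
  rcases le_or_gt i (4*E) with hi | hi <;> rcases le_or_gt j (4*E) with hj | hj
  · -- both low
    rw [if_pos hi, if_pos hj]
    obtain ⟨e1, e2⟩ := hMp (i+4*E) (j+4*E) (by omega) (by omega) (by omega) (by omega)
    obtain ⟨f1, f2⟩ := hMp i j (by omega) (by omega) (by omega) (by omega)
    have hd : ((((j+4*E-1)/4 : ℕ):ℤ) - (((i+4*E-1)/4 : ℕ):ℤ))
        = ((((j-1)/4 : ℕ):ℤ) - (((i-1)/4 : ℕ):ℤ)) := by omega
    obtain ⟨g1, g2⟩ := Ment_pair i j (i+4*E) (j+4*E) (by omega) (by omega) (by rw [hd])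
    exact ⟨fun _ => ⟨by rw [e1, f1, g1], by rw [e2, f2, g2]⟩, fun h => absurd h (by omega)⟩
  · -- i low, j high
    rw [if_pos hi, if_neg (by omega)]
    obtain ⟨e1, e2⟩ := hMp (i+4*E) (j-4*E) (by omega) (by omega) (by omega) (by omega)
    obtain ⟨f1, f2⟩ := hMp i j (by omega) (by omega) (by omega) (by omega)
    have hd' : ((((j-4*E-1)/4 : ℕ):ℤ) - (((i+4*E-1)/4 : ℕ):ℤ))
        = ((((j-1)/4 : ℕ):ℤ) - (((i-1)/4 : ℕ):ℤ)) - 2*(E:ℤ) := by omega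
    have hlow : 1 ≤ ((((j-1)/4 : ℕ):ℤ) - (((i-1)/4 : ℕ):ℤ)) := by omega
    have hhigh : ((((j-1)/4 : ℕ):ℤ) - (((i-1)/4 : ℕ):ℤ)) < 2*(E:ℤ) := by omega
    constructor
    · intro hne
      have hji : j ≠ i + 4*E := by omega
      by_cases hd : ((((j-1)/4 : ℕ):ℤ) - (((i-1)/4 : ℕ):ℤ)) = (E:ℤ)
      · have hr : (i-1)%4 ≠ (j-1)%4 := by omega
        have hdm : ((((j-4*E-1)/4 : ℕ):ℤ) - (((i+4*E-1)/4 : ℕ):ℤ)) = -(E:ℤ) := by omega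
        obtain ⟨g1, g2⟩ := Ment_pair_offdiag i j (i+4*E) (j-4*E) hr (by omega) (by omega)
          (by rw [hdm, hd, blockSC_neg _ hEne])
        exact ⟨by rw [e1, f1, g1], by rw [e2, f2, g2]⟩
      · have hb : blockSC ((((j-4*E-1)/4 : ℕ):ℤ) - (((i+4*E-1)/4 : ℕ):ℤ))
            = blockSC ((((j-1)/4 : ℕ):ℤ) - (((i-1)/4 : ℕ):ℤ)) := by
          rw [hd', ← hQE]
          exact blockSC_sub (n-2) (by omega) _ hlow (by rw [hQE]; exact hhigh)
            (by rw [hQE']; exact hd)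
        obtain ⟨g1, g2⟩ := Ment_pair i j (i+4*E) (j-4*E) (by omega) (by omega) hb
        exact ⟨by rw [e1, f1, g1], by rw [e2, f2, g2]⟩
    · intro heq
      have hji : j = i + 4*E := by omega
      have hr : (i-1)%4 = (j-1)%4 := by omega
      have hd : ((((j-1)/4 : ℕ):ℤ) - (((i-1)/4 : ℕ):ℤ)) = (E:ℤ) := by omega
      have hdm : ((((j-4*E-1)/4 : ℕ):ℤ) - (((i+4*E-1)/4 : ℕ):ℤ)) = -(E:ℤ) := by omega
      obtain ⟨g1, g2⟩ := Ment_pair_neg i j (i+4*E) (j-4*E) hr (by omega) (by omega)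
        (by rw [hdm, hd, blockSC_neg _ hEne]) (by rw [hdm, hd, blockSC_neg _ hEne])
      exact ⟨by rw [e1, f1, g1], by rw [e2, f2, g2]⟩
  · -- i high, j low
    rw [if_neg (by omega), if_pos hj]
    obtain ⟨e1, e2⟩ := hMp (i-4*E) (j+4*E) (by omega) (by omega) (by omega) (by omega)
    obtain ⟨f1, f2⟩ := hMp i j (by omega) (by omega) (by omega) (by omega)
    have hd' : ((((j+4*E-1)/4 : ℕ):ℤ) - (((i-4*E-1)/4 : ℕ):ℤ))
        = ((((j-1)/4 : ℕ):ℤ) - (((i-1)/4 : ℕ):ℤ)) + 2*(E:ℤ) := by omega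
    have hlow : ((((j-1)/4 : ℕ):ℤ) - (((i-1)/4 : ℕ):ℤ)) ≤ -1 := by omega
    have hhigh : -(2*(E:ℤ)) < ((((j-1)/4 : ℕ):ℤ) - (((i-1)/4 : ℕ):ℤ)) := by omega
    constructor
    · intro hne
      have hji : i ≠ j + 4*E := by omega
      by_cases hd : ((((j-1)/4 : ℕ):ℤ) - (((i-1)/4 : ℕ):ℤ)) = -(E:ℤ)
      · have hr : (i-1)%4 ≠ (j-1)%4 := by omega
        have hdm : ((((j+4*E-1)/4 : ℕ):ℤ) - (((i-4*E-1)/4 : ℕ):ℤ)) = (E:ℤ) := by omega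
        obtain ⟨g1, g2⟩ := Ment_pair_offdiag i j (i-4*E) (j+4*E) hr (by omega) (by omega)
          (by rw [hdm, hd, blockSC_neg _ hEne])
        exact ⟨by rw [e1, f1, g1], by rw [e2, f2, g2]⟩
      · have hb : blockSC ((((j+4*E-1)/4 : ℕ):ℤ) - (((i-4*E-1)/4 : ℕ):ℤ))
            = blockSC ((((j-1)/4 : ℕ):ℤ) - (((i-1)/4 : ℕ):ℤ)) := by
          rw [hd', ← hQE]
          exact blockSC_add (n-2) (by omega) _ hlow (by rw [hQE]; exact hhigh)
            (by rw [hQE']; exact hd)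
        obtain ⟨g1, g2⟩ := Ment_pair i j (i-4*E) (j+4*E) (by omega) (by omega) hb
        exact ⟨by rw [e1, f1, g1], by rw [e2, f2, g2]⟩
    · intro heq
      have hji : i = j + 4*E := by omega
      have hr : (i-1)%4 = (j-1)%4 := by omega
      have hd : ((((j-1)/4 : ℕ):ℤ) - (((i-1)/4 : ℕ):ℤ)) = -(E:ℤ) := by omega
      have hdm : ((((j+4*E-1)/4 : ℕ):ℤ) - (((i-4*E-1)/4 : ℕ):ℤ)) = (E:ℤ) := by omega
      have hneg := blockSC_neg (E:ℤ) hEne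
      obtain ⟨g1, g2⟩ := Ment_pair_neg i j (i-4*E) (j+4*E) hr (by omega) (by omega)
        (by rw [hdm, hd, hneg]) (by rw [hdm, hd, hneg]; ring)
      exact ⟨by rw [e1, f1, g1], by rw [e2, f2, g2]⟩
  · -- both high
    rw [if_neg (by omega), if_neg (by omega)]
    obtain ⟨e1, e2⟩ := hMp (i-4*E) (j-4*E) (by omega) (by omega) (by omega) (by omega)
    obtain ⟨f1, f2⟩ := hMp i j (by omega) (by omega) (by omega) (by omega)
    have hd : ((((j-4*E-1)/4 : ℕ):ℤ) - (((i-4*E-1)/4 : ℕ):ℤ))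
        = ((((j-1)/4 : ℕ):ℤ) - (((i-1)/4 : ℕ):ℤ)) := by omega
    obtain ⟨g1, g2⟩ := Ment_pair i j (i-4*E) (j-4*E) (by omega) (by omega) (by rw [hd])
    exact ⟨fun _ => ⟨by rw [e1, f1, g1], by rw [e2, f2, g2]⟩, fun h => absurd h (by omega)⟩
end

section
/- For p = 2^n with n ≥ 3, let f : ℤ → {0,1} be any function with f(n+1) = f(−(n+1)). Then the digraphs on vertex set {1,…,p} with adjacency matrices (f(M_p[i,j])) and (f(M_p^*[i,j])) are isomorphic; indeed the bijection σ̂ of {1,…,p} extending σ_{p,1} by σ̂(1) = 1 satisfies f(M_p[i,j]) = f(M_p^*[σ̂(i), σ̂(j)]) for all i and j. -/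
section Stmt17Aux

lemma blockSC_fst' (d : ℤ) : (blockSC d).1 = if d % 2 = 0 then 1 else -1 := by
  by_cases h0 : d = 0
  · simp [blockSC, h0]
  by_cases h1 : d % 4 = 1
  · simp [blockSC, h0, h1, show ¬ d % 2 = 0 by omega]
  by_cases h3 : d % 4 = 3
  · simp [blockSC, h0, h1, h3, show ¬ d % 2 = 0 by omega]
  · have h2 : d % 2 = 0 := by omega
    simp only [blockSC, if_neg h0, if_neg h1, if_neg h3, h2, if_pos]
    split <;> rfl

lemma blockSC_snd_mul' (x : ℕ) (y : ℤ) (hy : y % 2 = 1) :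
    (blockSC (y * 2^x)).2 = if y % 4 = 1 then (x:ℤ) + 4 else -((x:ℤ) + 4) := by
  have hy0 : y ≠ 0 := by omega
  have hd0 : y * 2^x ≠ 0 := by positivity
  match x with
  | 0 =>
    have h4 : y % 4 = 1 ∨ y % 4 = 3 := by omega
    rcases h4 with h | h
    · simp [blockSC, show y * 2^0 = y by ring, hy0, h]
    · simp [blockSC, show y * 2^0 = y by ring, hy0, h, show ¬ (3:ℤ) = 1 by norm_num,
        show ¬ y % 4 = 1 by omega]
  | (u+1) =>
    have hmod : (y * 2^(u+1)) % 4 ≠ 1 ∧ (y * 2^(u+1)) % 4 ≠ 3 := by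
      match u with
      | 0 => constructor <;> omega
      | v+1 =>
        have : y * 2^(v+2) = 4 * (y * 2^v) := by ring
        rw [this]; constructor <;> omega
    have hval : (y * 2^(u+1)).natAbs.factorization 2 = u+1 := by
      rw [Int.natAbs_mul]
      rw [Nat.factorization_mul (by simpa using hy0) (by positivity)]
      have h1 : (((2:ℤ)^(u+1)).natAbs) = 2^(u+1) := by
        rw [Int.natAbs_pow]; rfl
      rw [h1]
      have h2 : (2^(u+1) : ℕ).factorization 2 = u+1 := by
        simp [Nat.Prime.factorization_pow Nat.prime_two]
      have h3 : (y.natAbs).factorization 2 = 0 := by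
        apply Nat.factorization_eq_zero_of_not_dvd
        intro hdvd
        have : (2:ℤ) ∣ y := by
          have h2' : ((2:ℤ)).natAbs ∣ y.natAbs := hdvd
          exact Int.natAbs_dvd_natAbs.mp h2'
        omega
      simp [h2, h3, Finsupp.add_apply, Nat.Prime.factorization_self Nat.prime_two]
    have hq : (y * 2^(u+1)) / (2:ℤ)^(u+1) = y := by
      rw [Int.mul_ediv_cancel _ (by positivity)]
    simp only [blockSC, if_neg hd0, if_neg hmod.1, if_neg hmod.2, hval, hq]
    split <;> rfl

lemma exists_odd_mul' : ∀ k : ℕ, ∀ d : ℤ, d.natAbs ≤ k → d ≠ 0 →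
    ∃ x : ℕ, ∃ y : ℤ, y % 2 = 1 ∧ d = y * 2^x := by
  intro k
  induction k with
  | zero => intro d h1 h2; omega
  | succ k ih =>
    intro d h1 h2
    by_cases hodd : d % 2 = 1
    · exact ⟨0, d, hodd, by ring⟩
    · have he : d = 2 * (d/2) := by omega
      obtain ⟨x, y, hy, hd⟩ := ih (d/2) (by omega) (by omega)
      exact ⟨x+1, y, hy, by rw [he, hd]; ring⟩

lemma c_neg' (d : ℤ) : (blockSC (-d)).2 = -(blockSC d).2 := by
  by_cases h0 : d = 0
  · simp [h0, blockSC]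
  obtain ⟨x, y, hy, rfl⟩ := exists_odd_mul' d.natAbs d le_rfl h0
  have h1 : -(y * 2^x) = (-y) * 2^x := by ring
  rw [h1, blockSC_snd_mul' x (-y) (by omega), blockSC_snd_mul' x y hy]
  have h14 : y % 4 = 1 ∨ y % 4 = 3 := by omega
  rcases h14 with h | h
  · rw [if_neg (show ¬ (-y) % 4 = 1 by omega), if_pos h]
  · rw [if_pos (show (-y) % 4 = 1 by omega), if_neg (show ¬ y % 4 = 1 by omega)]
    ring

lemma c_pow' (t : ℕ) : (blockSC (2^t)).2 = (t:ℤ) + 4 := by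
  have := blockSC_snd_mul' t 1 (by norm_num)
  simpa using this

lemma c_compl' (m : ℕ) (d : ℤ) (h1 : 1 ≤ d) (h2 : d < 2^m) (h3 : d ≠ 2^(m-1)) :
    (blockSC (2^m - d)).2 = -(blockSC d).2 := by
  obtain ⟨x, y, hy, rfl⟩ := exists_odd_mul' d.natAbs d le_rfl (by omega)
  have hx2 : (0:ℤ) < 2^x := by positivity
  have hypos : 1 ≤ y := by
    by_contra h
    push_neg at h
    have : y * 2^x ≤ 0 := mul_nonpos_of_nonpos_of_nonneg (by omega) (by positivity)
    omega
  have hxd : (2:ℤ)^x ≤ y * 2^x := le_mul_of_one_le_left (by positivity) hypos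
  have hxm : x < m := by
    have : (2:ℤ)^x < 2^m := by omega
    exact (pow_lt_pow_iff_right₀ (by norm_num)).mp this
  have hxm2 : x ≤ m - 2 := by
    rcases Nat.lt_or_ge x (m-1) with h | h
    · omega
    · have hx : x = m - 1 := by omega
      exfalso
      have hm1 : (2:ℤ)^m = 2^(m-1) * 2 := by
        rw [← pow_succ]; congr 1; omega
      rw [hx] at h2 hx2 h3
      have hy2 : y < 2 := by nlinarith
      have hy1 : y = 1 := by omega
      rw [hy1] at h3; simp at h3
  have hm2 : 2 ≤ m := by
    by_contra hc
    push_neg at hc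
    interval_cases m
    · norm_num at h2; omega
    · norm_num at h2 h3
      have hx0 : x = 0 := by omega
      rw [hx0] at h2 h3; norm_num at h2 h3; omega
  have hsplit : (2:ℤ)^m = 2^(m-x) * 2^x := by
    rw [← pow_add]; congr 1; omega
  have h4dvd : (4:ℤ) ∣ 2^(m-x) := by
    have : (2:ℤ)^2 ∣ 2^(m-x) := pow_dvd_pow 2 (by omega)
    simpa using this
  have hrw : (2:ℤ)^m - y * 2^x = (2^(m-x) - y) * 2^x := by rw [hsplit]; ring
  rw [hrw, blockSC_snd_mul' x (2^(m-x) - y) (by omega), blockSC_snd_mul' x y hy]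
  have h14 : y % 4 = 1 ∨ y % 4 = 3 := by omega
  rcases h14 with h | h
  · rw [if_neg (show ¬ ((2:ℤ)^(m-x) - y) % 4 = 1 by omega), if_pos h]
  · rw [if_pos (show ((2:ℤ)^(m-x) - y) % 4 = 1 by omega), if_neg (show ¬ y % 4 = 1 by omega)]
    ring

/-- permutation of 0-based residues mod 4 induced by `σ`. -/
def pi4 : ℕ → ℕ := fun r => if r = 0 then 0 else if r = 1 then 3 else if r = 2 then 1 else 2

lemma Mgen' (ra rb : ℕ) (hra : ra < 4) (hrb : rb < 4) (d d' : ℤ)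
    (hd : d' = -d + (if ra = 0 then 0 else 1) - (if rb = 0 then 0 else 1)) :
    (blockSC d').1 * M4s (pi4 ra + 1) (pi4 rb + 1)
      + (if pi4 ra = pi4 rb then -(blockSC d').2 else 0)
    = (blockSC d).1 * M4 (ra + 1) (rb + 1)
      + (if ra = rb then (blockSC d).2 else 0) := by
  interval_cases ra <;> interval_cases rb <;>
    (norm_num [pi4] at hd ⊢; subst hd;
     norm_num [pi4, M4, M4s, blockSC_fst', c_neg']) <;>
    (try split_ifs <;> omega)

lemma sig_formula' : ∀ m : ℕ, ∀ i, 2 ≤ i → i ≤ 2^(m+2) →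
    sigma (m+2) 1 i + i + (if i % 4 = 3 then 1 else 0)
      = 2^(m+2) + 2 + (if i % 4 = 0 then 1 else 0) := by
  intro m
  induction m with
  | zero => intro i h1 h2; interval_cases i <;> decide
  | succ m ih =>
    intro i h1 h2
    have hP : 1 ≤ 2^(m+2) := Nat.one_le_two_pow
    have h4 : (4:ℕ) ∣ 2^(m+2) := by
      have : (2:ℕ)^2 ∣ 2^(m+2) := pow_dvd_pow 2 (by omega)
      simpa using this
    have hpow : (2:ℕ)^(m+1+2) = 2 * 2^(m+2) := by ring
    show (if 1 ≤ 2^(m+2) then _ else _) + i + _ = _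
    rw [if_pos hP]
    by_cases hi : i = 1 + 2^(m+2)
    · rw [if_pos hi]
      split_ifs <;> omega
    · rw [if_neg hi]
      by_cases hle : i ≤ 2^(m+2)
      · rw [if_pos hle]
        have e := ih i h1 hle
        split_ifs at e ⊢ <;> omega
      · rw [if_neg hle]
        have e := ih (i - 2^(m+2)) (by omega) (by omega)
        split_ifs at e ⊢ <;> omega

lemma Ment_def (i j : ℕ) : Ment i j
    = (blockSC ((((j-1)/4 : ℕ) : ℤ) - (((i-1)/4 : ℕ) : ℤ))).1
        * M4 ((i-1) % 4 + 1) ((j-1) % 4 + 1)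
      + (if (i-1) % 4 = (j-1) % 4
          then (blockSC ((((j-1)/4 : ℕ) : ℤ) - (((i-1)/4 : ℕ) : ℤ))).2 else 0) := rfl

lemma Ments_def (i j : ℕ) : Ments i j
    = (blockSC ((((j-1)/4 : ℕ) : ℤ) - (((i-1)/4 : ℕ) : ℤ))).1
        * M4s ((i-1) % 4 + 1) ((j-1) % 4 + 1)
      + (if (i-1) % 4 = (j-1) % 4
          then -(blockSC ((((j-1)/4 : ℕ) : ℤ) - (((i-1)/4 : ℕ) : ℤ))).2 else 0) := rfl

end Stmt17Aux


/-- For `p = 2^n` with `n ≥ 3` and any `f : ℤ → {0,1}` with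
`f(n+1) = f(−(n+1))`, the digraphs with adjacency matrices `(f(M_p[i,j]))` and
`(f(M_p*[i,j]))` are isomorphic via the bijection `σ̂` extending `σ_{p,1}` by
`σ̂(1) = 1`. -/
theorem stmt17 (n p : ℕ) (hn : 3 ≤ n) (hp : p = 2^n)
    (f : ℤ → Fin 2) (hf : f ((n:ℤ) + 1) = f (-((n:ℤ) + 1))) :
    let σh : ℕ → ℕ := fun i => if i = 1 then 1 else sigma n 1 i
    Set.BijOn σh (Set.Icc 1 p) (Set.Icc 1 p) ∧
    ∀ i ∈ Set.Icc 1 p, ∀ j ∈ Set.Icc 1 p,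
      f (Mp n i j) = f (Mps n (σh i) (σh j)) := by
  intro σh
  obtain ⟨q, rfl⟩ : ∃ q, n = q + 3 := ⟨n - 3, by omega⟩
  subst hp
  have hQ4 : (2:ℕ)^(q+3) = 4 * 2^(q+1) := by ring
  have hQ2 : (2:ℕ)^(q+1) = 2 * 2^q := by ring
  have hQ1 : 1 ≤ (2:ℕ)^q := Nat.one_le_two_pow
  have hσ1 : σh 1 = 1 := by simp [σh]
  have key : ∀ i, 2 ≤ i → i ≤ 2^(q+3) →
      σh i + i + (if i % 4 = 3 then 1 else 0)
        = 2^(q+3) + 2 + (if i % 4 = 0 then 1 else 0) := by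
    intro i h1 h2
    have h := sig_formula' (q+1) i h1 h2
    simpa [σh, show i ≠ 1 by omega] using h
  have hmaps : ∀ i, 1 ≤ i → i ≤ 2^(q+3) → 1 ≤ σh i ∧ σh i ≤ 2^(q+3) := by
    intro i h1 h2
    by_cases hi1 : i = 1
    · rw [hi1, hσ1]; omega
    · have hk := key i (by omega) h2
      split_ifs at hk <;> omega
  have hchar : ∀ jj, 2 ≤ jj → jj ≤ 2^(q+3) →
      (σh jj - 1) / 4
          = (if (jj-1) % 4 = 0 then 2^(q+1) - (jj-1)/4 else 2^(q+1) - 1 - (jj-1)/4)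
      ∧ (σh jj - 1) % 4 = pi4 ((jj-1) % 4)
      ∧ (jj-1)/4 ≤ 2^(q+1) - 1
      ∧ ((jj-1) % 4 = 0 → 1 ≤ (jj-1)/4) := by
    intro jj h2 h3
    have hk := key jj h2 h3
    rcases (show (jj-1) % 4 = 0 ∨ (jj-1) % 4 = 1 ∨ (jj-1) % 4 = 2 ∨ (jj-1) % 4 = 3
        by omega) with h | h | h | h
    · rw [if_neg (show ¬ jj % 4 = 3 by omega), if_neg (show ¬ jj % 4 = 0 by omega)] at hk
      rw [h]; norm_num [pi4]
      refine ⟨by omega, by omega, by omega, by omega⟩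
    · rw [if_neg (show ¬ jj % 4 = 3 by omega), if_neg (show ¬ jj % 4 = 0 by omega)] at hk
      rw [h]; norm_num [pi4]
      refine ⟨by omega, by omega, by omega⟩
    · rw [if_pos (show jj % 4 = 3 by omega), if_neg (show ¬ jj % 4 = 0 by omega)] at hk
      rw [h]; norm_num [pi4]
      refine ⟨by omega, by omega, by omega⟩
    · rw [if_neg (show ¬ jj % 4 = 3 by omega), if_pos (show jj % 4 = 0 by omega)] at hk
      rw [h]; norm_num [pi4]
      refine ⟨by omega, by omega, by omega⟩
  constructor
  · -- BijOn
    have hm : Set.MapsTo σh (Set.Icc 1 (2^(q+3))) (Set.Icc 1 (2^(q+3))) := by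
      intro i hi
      simp only [Set.mem_Icc] at hi ⊢
      exact hmaps i hi.1 hi.2
    have hinj : Set.InjOn σh (Set.Icc 1 (2^(q+3))) := by
      intro i hi j hj heq
      simp only [Set.mem_Icc] at hi hj
      by_cases ha1 : i = 1 <;> by_cases hb1 : j = 1
      · omega
      · exfalso
        rw [ha1, hσ1] at heq
        have hk := key j (by omega) hj.2
        rw [← heq] at hk
        split_ifs at hk <;> omega
      · exfalso
        rw [hb1, hσ1] at heq
        have hk := key i (by omega) hi.2
        rw [heq] at hk
        split_ifs at hk <;> omega
      · have hki := key i (by omega) hi.2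
        have hkj := key j (by omega) hj.2
        rw [heq] at hki
        split_ifs at hki hkj <;> omega
    exact (Set.Finite.injOn_iff_bijOn_of_mapsTo (Set.finite_Icc _ _) hm).mp hinj
  · -- entries
    intro i hi j hj
    simp only [Set.mem_Icc] at hi hj
    obtain ⟨hbi1, hbi2⟩ := hmaps i hi.1 hi.2
    obtain ⟨hbj1, hbj2⟩ := hmaps j hj.1 hj.2
    simp only [Mp, Mps]
    rw [if_pos ⟨hi.1, hi.2, hj.1, hj.2⟩, if_pos ⟨hbi1, hbi2, hbj1, hbj2⟩]
    by_cases hi1 : i = 1 <;> by_cases hj1 : j = 1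
    · have h11 : Ment 1 1 = Ments 1 1 := by decide
      rw [hi1, hj1, hσ1, h11]
    · -- i = 1, j ≥ 2
      obtain ⟨hdj, hmj, hbj, hbj0⟩ := hchar j (by omega) hj.2
      rw [hi1, hσ1, Ment_def, Ments_def, hdj, hmj]
      simp only [show ((1:ℕ)-1)/4 = 0 from rfl, show ((1:ℕ)-1)%4 = 0 from rfl,
        Nat.cast_zero, sub_zero]
      rcases (show (j-1) % 4 = 0 ∨ (j-1) % 4 = 1 ∨ (j-1) % 4 = 2 ∨ (j-1) % 4 = 3
          by omega) with h | h | h | h <;> rw [h]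
      · rw [show pi4 0 = 0 from rfl, if_pos rfl, if_pos rfl, if_pos rfl,
          show M4 (0+1) (0+1) = 0 from rfl, show M4s (0+1) (0+1) = 0 from rfl]
        simp only [mul_zero, zero_add]
        by_cases hmid : (j-1)/4 = 2^q
        · rw [hmid, show 2^(q+1) - 2^q = 2^q by omega,
            show (((2:ℕ)^q : ℕ) : ℤ) = (2:ℤ)^q from by push_cast; ring, c_pow']
          convert hf using 2 <;> push_cast <;> ring
        · congr 1
          have hc := c_compl' (q+1) (((j-1)/4 : ℕ) : ℤ)
            (by exact_mod_cast (show (1:ℕ) ≤ (j-1)/4 by omega))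
            (by exact_mod_cast (show (j-1)/4 < 2^(q+1) by omega)) (by
              simp only [show (q+1)-1 = q from rfl]
              intro hcon
              exact hmid (by exact_mod_cast hcon))
          rw [show ((2^(q+1) - (j-1)/4 : ℕ) : ℤ) = (2:ℤ)^(q+1) - (((j-1)/4 : ℕ) : ℤ) from by
            push_cast [Nat.cast_sub (by omega : (j-1)/4 ≤ 2^(q+1))]; ring, hc]
          ring
      · rw [if_neg (by norm_num : ¬ (1:ℕ) = 0), show pi4 1 = 3 from rfl, if_neg (by norm_num : ¬ (0:ℕ) = 1),
          if_neg (by norm_num : ¬ (0:ℕ) = 3),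
          show M4 (0+1) (1+1) = 1 from rfl, show M4s (0+1) (3+1) = -1 from rfl]
        simp only [add_zero]
        congr 1
        rw [blockSC_fst', blockSC_fst']
        split_ifs <;> first | omega | norm_num | simp_all
      · rw [if_neg (by norm_num : ¬ (2:ℕ) = 0), show pi4 2 = 1 from rfl, if_neg (by norm_num : ¬ (0:ℕ) = 2),
          if_neg (by norm_num : ¬ (0:ℕ) = 1),
          show M4 (0+1) (2+1) = 2 from rfl, show M4s (0+1) (1+1) = -2 from rfl]
        simp only [add_zero]
        congr 1
        rw [blockSC_fst', blockSC_fst']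
        split_ifs <;> first | omega | norm_num | simp_all
      · rw [if_neg (by norm_num : ¬ (3:ℕ) = 0), show pi4 3 = 2 from rfl, if_neg (by norm_num : ¬ (0:ℕ) = 3),
          if_neg (by norm_num : ¬ (0:ℕ) = 2),
          show M4 (0+1) (3+1) = 3 from rfl, show M4s (0+1) (2+1) = -3 from rfl]
        simp only [add_zero]
        congr 1
        rw [blockSC_fst', blockSC_fst']
        split_ifs <;> first | omega | norm_num | simp_all
    · -- j = 1, i ≥ 2
      obtain ⟨hdi, hmi, hbi, hbi0⟩ := hchar i (by omega) hi.2
      rw [hj1, hσ1, Ment_def, Ments_def, hdi, hmi]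
      simp only [show ((1:ℕ)-1)/4 = 0 from rfl, show ((1:ℕ)-1)%4 = 0 from rfl,
        Nat.cast_zero, zero_sub]
      rcases (show (i-1) % 4 = 0 ∨ (i-1) % 4 = 1 ∨ (i-1) % 4 = 2 ∨ (i-1) % 4 = 3
          by omega) with h | h | h | h <;> rw [h]
      · rw [show pi4 0 = 0 from rfl, if_pos rfl, if_pos rfl, if_pos rfl,
          show M4 (0+1) (0+1) = 0 from rfl, show M4s (0+1) (0+1) = 0 from rfl]
        simp only [mul_zero, zero_add]
        by_cases hmid : (i-1)/4 = 2^q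
        · rw [hmid, show 2^(q+1) - 2^q = 2^q by omega,
            show (((2:ℕ)^q : ℕ) : ℤ) = (2:ℤ)^q from by push_cast; ring,
            c_neg', neg_neg, c_pow']
          convert hf.symm using 2 <;> push_cast <;> ring
        · congr 1
          have hc := c_compl' (q+1) (((i-1)/4 : ℕ) : ℤ)
            (by exact_mod_cast (show (1:ℕ) ≤ (i-1)/4 by omega))
            (by exact_mod_cast (show (i-1)/4 < 2^(q+1) by omega)) (by
              simp only [show (q+1)-1 = q from rfl]
              intro hcon
              exact hmid (by exact_mod_cast hcon))
          rw [c_neg', c_neg',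
            show ((2^(q+1) - (i-1)/4 : ℕ) : ℤ) = (2:ℤ)^(q+1) - (((i-1)/4 : ℕ) : ℤ) from by
              push_cast [Nat.cast_sub (by omega : (i-1)/4 ≤ 2^(q+1))]; ring, hc]
          ring
      · rw [if_neg (by norm_num : ¬ (1:ℕ) = 0), show pi4 1 = 3 from rfl, if_neg (by norm_num : ¬ (1:ℕ) = 0),
          if_neg (by norm_num : ¬ (3:ℕ) = 0),
          show M4 (1+1) (0+1) = -1 from rfl, show M4s (3+1) (0+1) = 1 from rfl]
        simp only [add_zero]
        congr 1
        rw [blockSC_fst', blockSC_fst']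
        split_ifs <;> first | omega | norm_num | simp_all
      · rw [if_neg (by norm_num : ¬ (2:ℕ) = 0), show pi4 2 = 1 from rfl, if_neg (by norm_num : ¬ (2:ℕ) = 0),
          if_neg (by norm_num : ¬ (1:ℕ) = 0),
          show M4 (2+1) (0+1) = -2 from rfl, show M4s (1+1) (0+1) = 2 from rfl]
        simp only [add_zero]
        congr 1
        rw [blockSC_fst', blockSC_fst']
        split_ifs <;> first | omega | norm_num | simp_all
      · rw [if_neg (by norm_num : ¬ (3:ℕ) = 0), show pi4 3 = 2 from rfl, if_neg (by norm_num : ¬ (3:ℕ) = 0),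
          if_neg (by norm_num : ¬ (2:ℕ) = 0),
          show M4 (3+1) (0+1) = -3 from rfl, show M4s (2+1) (0+1) = 3 from rfl]
        simp only [add_zero]
        congr 1
        rw [blockSC_fst', blockSC_fst']
        split_ifs <;> first | omega | norm_num | simp_all
    · -- generic
      obtain ⟨hdi, hmi, hbi, hbi0⟩ := hchar i (by omega) hi.2
      obtain ⟨hdj, hmj, hbj, hbj0⟩ := hchar j (by omega) hj.2
      rw [Ment_def, Ments_def, hdi, hmi, hdj, hmj]
      congr 1
      refine (Mgen' ((i-1)%4) ((j-1)%4) (by omega) (by omega) _ _ ?_).symm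
      split_ifs <;> omega
end

section
/- For each p = 2^n with n ≥ 2 and any function f : ℤ → {0,1}, the digraphs D and D^* on vertex set {1,…,p} with adjacency matrices (f(M_p[i,j])) and (f(M_p^*[i,j])) are hypomorphic: for each k from 1 to p and all i, j ≠ k, f(M_p[i,j]) = f(M_p^*[σ_{p,k}(i), σ_{p,k}(j)]), so σ_{p,k} is an isomorphism of D − k onto D^* − k. -/
namespace S18
open Set

/-- `Q s i j`: entry with extra block shift `s`. -/
def Q (s : ℤ) (i j : ℕ) : ℤ :=
  (blockSC ((((j-1)/4 : ℕ) : ℤ) - (((i-1)/4 : ℕ) : ℤ) + s)).1 * M4 ((i-1) % 4 + 1) ((j-1) % 4 + 1)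
    + (if (i-1) % 4 = (j-1) % 4 then (blockSC ((((j-1)/4 : ℕ) : ℤ) - (((i-1)/4 : ℕ) : ℤ) + s)).2 else 0)

def Qs (s : ℤ) (i j : ℕ) : ℤ :=
  (blockSC ((((j-1)/4 : ℕ) : ℤ) - (((i-1)/4 : ℕ) : ℤ) + s)).1 * M4s ((i-1) % 4 + 1) ((j-1) % 4 + 1)
    + (if (i-1) % 4 = (j-1) % 4 then -(blockSC ((((j-1)/4 : ℕ) : ℤ) - (((i-1)/4 : ℕ) : ℤ) + s)).2 else 0)

lemma Ment_eq (i j : ℕ) : Ment i j = Q 0 i j := by simp [Ment, Q]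
lemma Ments_eq (i j : ℕ) : Ments i j = Qs 0 i j := by simp [Ments, Qs]

lemma Q_shr (s : ℤ) (i j t : ℕ) (hj : 1 ≤ j) : Q s i (j + 4*t) = Q (s + t) i j := by
  have h1 : (j+4*t-1)/4 = (j-1)/4 + t := by omega
  have h2 : (j+4*t-1)%4 = (j-1)%4 := by omega
  have h3 : ((((j-1)/4 + t : ℕ)):ℤ) - (((i-1)/4 : ℕ) : ℤ) + s
      = (((j-1)/4 : ℕ) : ℤ) - (((i-1)/4:ℕ) : ℤ) + (s + t) := by push_cast; ring
  simp only [Q, h1, h2, h3]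

lemma Q_shl (s : ℤ) (i j t : ℕ) (hi : 1 ≤ i) : Q s (i + 4*t) j = Q (s - t) i j := by
  have h1 : (i+4*t-1)/4 = (i-1)/4 + t := by omega
  have h2 : (i+4*t-1)%4 = (i-1)%4 := by omega
  have h3 : (((j-1)/4 : ℕ) : ℤ) - ((((i-1)/4 + t : ℕ)):ℤ) + s
      = (((j-1)/4 : ℕ) : ℤ) - (((i-1)/4:ℕ) : ℤ) + (s - t) := by push_cast; ring
  simp only [Q, h1, h2, h3]

lemma Qs_shr (s : ℤ) (i j t : ℕ) (hj : 1 ≤ j) : Qs s i (j + 4*t) = Qs (s + t) i j := by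
  have h1 : (j+4*t-1)/4 = (j-1)/4 + t := by omega
  have h2 : (j+4*t-1)%4 = (j-1)%4 := by omega
  have h3 : ((((j-1)/4 + t : ℕ)):ℤ) - (((i-1)/4 : ℕ) : ℤ) + s
      = (((j-1)/4 : ℕ) : ℤ) - (((i-1)/4:ℕ) : ℤ) + (s + t) := by push_cast; ring
  simp only [Qs, h1, h2, h3]

lemma Qs_shl (s : ℤ) (i j t : ℕ) (hi : 1 ≤ i) : Qs s (i + 4*t) j = Qs (s - t) i j := by
  have h1 : (i+4*t-1)/4 = (i-1)/4 + t := by omega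
  have h2 : (i+4*t-1)%4 = (i-1)%4 := by omega
  have h3 : (((j-1)/4 : ℕ) : ℤ) - ((((i-1)/4 + t : ℕ)):ℤ) + s
      = (((j-1)/4 : ℕ) : ℤ) - (((i-1)/4:ℕ) : ℤ) + (s - t) := by push_cast; ring
  simp only [Qs, h1, h2, h3]

lemma Q_diag (s : ℤ) (i : ℕ) : Q s i i = (blockSC s).2 := by
  have h4 : (i-1)%4 = 0 ∨ (i-1)%4 = 1 ∨ (i-1)%4 = 2 ∨ (i-1)%4 = 3 := by omega
  simp only [Q, sub_self, zero_add, if_pos rfl]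
  rcases h4 with h|h|h|h <;> rw [h] <;> norm_num [M4]

lemma Qs_diag (s : ℤ) (i : ℕ) : Qs s i i = -(blockSC s).2 := by
  have h4 : (i-1)%4 = 0 ∨ (i-1)%4 = 1 ∨ (i-1)%4 = 2 ∨ (i-1)%4 = 3 := by omega
  simp only [Qs, sub_self, zero_add, if_pos rfl]
  rcases h4 with h|h|h|h <;> rw [h] <;> norm_num [M4s]

end S18

namespace S18

lemma blockSC_zero : blockSC 0 = (1, 0) := rfl

lemma blockSC_odd1 {d : ℤ} (h : d % 2 = 1) : (blockSC d).1 = -1 := by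
  have hd0 : d ≠ 0 := by omega
  have h4 : d % 4 = 1 ∨ d % 4 = 3 := by omega
  rcases h4 with h4 | h4 <;> simp [blockSC, hd0, h4]

lemma blockSC_even1 {d : ℤ} (h : d % 2 = 0) : (blockSC d).1 = 1 := by
  rcases eq_or_ne d 0 with rfl | hd0
  · rfl
  · have h1 : d % 4 ≠ 1 := by omega
    have h3 : d % 4 ≠ 3 := by omega
    simp only [blockSC, if_neg hd0, if_neg h1, if_neg h3]
    split <;> rfl

lemma blockSC_mul (x : ℕ) (y : ℤ) (hy : y % 2 = 1) :
    blockSC (y * 2^x) = if x = 0 then (if y % 4 = 1 then ((-1 : ℤ), (4 : ℤ)) else (-1, -4))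
      else (if y % 4 = 1 then (1, (x:ℤ)+4) else (1, -((x:ℤ)+4))) := by
  have hy0 : y ≠ 0 := by omega
  have hy4 : y % 4 = 1 ∨ y % 4 = 3 := by omega
  cases x with
  | zero =>
    simp only [pow_zero, mul_one, if_pos rfl]
    have hd0 : y ≠ 0 := hy0
    rcases hy4 with h4 | h4
    · simp [blockSC, hd0, h4]
    · simp [blockSC, hd0, h4]
  | succ t =>
    have hp0 : (2:ℤ)^(t+1) ≠ 0 := by positivity
    have hd0 : y * 2^(t+1) ≠ 0 := mul_ne_zero hy0 hp0
    have h2 : (y * 2^(t+1)) % 2 = 0 := by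
      have : (2:ℤ) ∣ y * 2^(t+1) := ⟨y * 2^t, by ring⟩
      omega
    have h1 : (y * 2^(t+1)) % 4 ≠ 1 := by omega
    have h3 : (y * 2^(t+1)) % 4 ≠ 3 := by omega
    have hfact : (y * 2^(t+1)).natAbs.factorization 2 = t+1 := by
      have hna : (y * 2^(t+1)).natAbs = y.natAbs * 2^(t+1) := by
        rw [Int.natAbs_mul, Int.natAbs_pow]; rfl
      have hyna : y.natAbs ≠ 0 := Int.natAbs_ne_zero.mpr hy0
      have hynd : ¬ (2 ∣ y.natAbs) := by
        rw [Nat.two_dvd_ne_zero]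
        have : Odd y := by rwa [Int.odd_iff]
        have : Odd y.natAbs := this.natAbs
        omega
      rw [hna, Nat.factorization_mul hyna (by positivity)]
      rw [Finsupp.add_apply, Nat.factorization_eq_zero_of_not_dvd hynd,
        Nat.Prime.factorization_pow Nat.prime_two]
      simp
    have hdiv : y * 2^(t+1) / (2:ℤ)^(t+1) = y := Int.mul_ediv_cancel y hp0
    simp only [blockSC, if_neg hd0, if_neg h1, if_neg h3, hfact, hdiv, if_neg (Nat.succ_ne_zero t)]

/-- relation on block shifts -/
def RB (d e : ℤ) : Prop :=
  (d = 0 ∧ e = 0) ∨ ∃ x : ℕ, ∃ y z : ℤ, y % 2 = 1 ∧ z % 2 = 1 ∧ (4:ℤ) ∣ (y+z) ∧ d = y*2^x ∧ e = z*2^x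

lemma RB_zero : RB 0 0 := Or.inl ⟨rfl, rfl⟩

lemma RB_odd {d e : ℤ} (hd : d % 2 = 1) (he : e % 2 = 1) (h4 : (4:ℤ) ∣ (d+e)) : RB d e :=
  Or.inr ⟨0, d, e, hd, he, h4, by ring, by ring⟩

lemma RB_mul_pow {d e : ℤ} (t : ℕ) (h : RB d e) : RB (d * 2^t) (e * 2^t) := by
  rcases h with ⟨rfl, rfl⟩ | ⟨x, y, z, hy, hz, h4, rfl, rfl⟩
  · exact Or.inl ⟨by ring, by ring⟩
  · exact Or.inr ⟨x + t, y, z, hy, hz, h4, by rw [pow_add]; ring, by rw [pow_add]; ring⟩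

lemma RB_sum4 {d e : ℤ} (h : RB d e) : (4:ℤ) ∣ (d + e) := by
  rcases h with ⟨rfl, rfl⟩ | ⟨x, y, z, hy, hz, h4, rfl, rfl⟩
  · simp
  · have : y*2^x + z*2^x = (y+z)*2^x := by ring
    rw [this]
    exact Dvd.dvd.mul_right h4 _

lemma SC {d e : ℤ} (h : RB d e) :
    (blockSC d).1 = (blockSC e).1 ∧ (blockSC d).2 = -(blockSC e).2 := by
  rcases h with ⟨rfl, rfl⟩ | ⟨x, y, z, hy, hz, h4, rfl, rfl⟩
  · simp [blockSC_zero]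
  · have hy4 : y % 4 = 1 ∨ y % 4 = 3 := by omega
    rw [blockSC_mul x y hy, blockSC_mul x z hz]
    rcases hy4 with h1 | h1
    · have h2 : z % 4 = 3 := by omega
      have h2' : z % 4 ≠ 1 := by omega
      cases x <;> simp [h1, h2']
    · have h2 : z % 4 = 1 := by omega
      have h1' : y % 4 ≠ 1 := by omega
      cases x <;> simp [h1', h2]

end S18

namespace S18

lemma pow_m2 (m : ℕ) : (2:ℕ)^(m+2) = 4 * 2^m := by rw [pow_add]; ring
lemma pow_m3 (m : ℕ) : (2:ℕ)^(m+3) = 8 * 2^m := by rw [pow_add]; ring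

lemma sigma_base (k i : ℕ) : sigma 2 k i = sigma4 k i := rfl

lemma sigma_low {m k i : ℕ} (hk1 : 1 ≤ k) (hk : k ≤ 2^(m+2)) (hi : i ≤ 2^(m+2)) (hik : i ≠ k) :
    sigma (m+3) k i = sigma (m+2) k i + 2^(m+2) := by
  have h1 : i ≠ k + 2^(m+2) := by omega
  simp only [sigma, if_pos hk, if_neg h1, if_pos hi]

lemma sigma_high {m k i : ℕ} (hk : k ≤ 2^(m+2)) (hi : 2^(m+2) < i) (hik : i ≠ k + 2^(m+2)) :
    sigma (m+3) k i = sigma (m+2) k (i - 2^(m+2)) := by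
  have h2 : ¬ (i ≤ 2^(m+2)) := by omega
  simp only [sigma, if_pos hk, if_neg hik, if_neg h2]

lemma sigma_fix {m k : ℕ} (hk : k ≤ 2^(m+2)) :
    sigma (m+3) k (k + 2^(m+2)) = k + 2^(m+2) := by
  simp [sigma, if_pos hk]

lemma sigma_low' {m k i : ℕ} (hk : ¬ (k ≤ 2^(m+2))) (hi : i ≤ 2^(m+2)) (hik : i ≠ k - 2^(m+2)) :
    sigma (m+3) k i = sigma (m+2) (k - 2^(m+2)) i + 2^(m+2) := by
  simp only [sigma, if_neg hk, if_neg hik, if_pos hi]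

lemma sigma_high' {m k i : ℕ} (hk : ¬ (k ≤ 2^(m+2))) (hkk : k ≤ 2^(m+3)) (hi : ¬ (i ≤ 2^(m+2)))
    (hik : i ≠ k) :
    sigma (m+3) k i = sigma (m+2) (k - 2^(m+2)) (i - 2^(m+2)) := by
  have hP8 := pow_m3 m
  have hP4 := pow_m2 m
  have h1 : i ≠ k - 2^(m+2) := by omega
  simp only [sigma, if_neg hk, if_neg h1, if_neg hi]

lemma sigma_fix' {m k : ℕ} (hk : ¬ (k ≤ 2^(m+2))) :
    sigma (m+3) k (k - 2^(m+2)) = k - 2^(m+2) := by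
  simp [sigma, if_neg hk]

lemma sig4_facts : ∀ k i : Fin 4, i ≠ k →
    1 ≤ sigma4 (k+1) (i+1) ∧ sigma4 (k+1) (i+1) ≤ 4 ∧ sigma4 ((k:ℕ)+1) ((i:ℕ)+1) ≠ (k:ℕ)+1 := by
  decide

lemma sig4_inj : ∀ k i j : Fin 4, i ≠ k → j ≠ k →
    sigma4 ((k:ℕ)+1) ((i:ℕ)+1) = sigma4 ((k:ℕ)+1) ((j:ℕ)+1) → i = j := by decide

lemma sig_range : ∀ m k i : ℕ, 1 ≤ k → k ≤ 2^(m+2) → 1 ≤ i → i ≤ 2^(m+2) → i ≠ k →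
    1 ≤ sigma (m+2) k i ∧ sigma (m+2) k i ≤ 2^(m+2) ∧ sigma (m+2) k i ≠ k := by
  intro m
  induction m with
  | zero =>
    intro k i hk1 hk4 hi1 hi4 hik
    obtain ⟨k0, rfl⟩ : ∃ k0, k = k0 + 1 := ⟨k - 1, by omega⟩
    obtain ⟨i0, rfl⟩ : ∃ i0, i = i0 + 1 := ⟨i - 1, by omega⟩
    have := sig4_facts ⟨k0, by omega⟩ ⟨i0, by omega⟩ (by simp [Fin.ext_iff]; omega)
    rw [sigma_base]
    exact this
  | succ m ih =>
    intro k i hk1 hkP hi1 hiP hik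
    simp only [show m+1+2 = m+3 from rfl] at hkP hiP ⊢
    have hP4 := pow_m2 m
    have hP8 := pow_m3 m
    by_cases hk : k ≤ 2^(m+2)
    · rcases eq_or_ne i (k + 2^(m+2)) with rfl | hfix
      · rw [sigma_fix hk]; omega
      · by_cases hi : i ≤ 2^(m+2)
        · rw [sigma_low hk1 hk hi hik]
          have := ih k i hk1 hk hi1 hi hik
          omega
        · rw [sigma_high hk (by omega) hfix]
          have := ih k (i - 2^(m+2)) hk1 hk (by omega) (by omega) (by omega)
          omega
    · rcases eq_or_ne i (k - 2^(m+2)) with hfix | hfix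
      · rw [hfix, sigma_fix' hk]; omega
      · by_cases hi : i ≤ 2^(m+2)
        · rw [sigma_low' hk hi hfix]
          have := ih (k - 2^(m+2)) i (by omega) (by omega) hi1 hi hfix
          omega
        · rw [sigma_high' hk (by omega) hi hik]
          have := ih (k - 2^(m+2)) (i - 2^(m+2)) (by omega) (by omega) (by omega) (by omega)
            (by omega)
          omega

lemma sig_inj : ∀ m k i j : ℕ, 1 ≤ k → k ≤ 2^(m+2) → 1 ≤ i → i ≤ 2^(m+2) → i ≠ k →
    1 ≤ j → j ≤ 2^(m+2) → j ≠ k → sigma (m+2) k i = sigma (m+2) k j → i = j := by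
  intro m
  induction m with
  | zero =>
    intro k i j hk1 hk4 hi1 hi4 hik hj1 hj4 hjk h
    obtain ⟨k0, rfl⟩ : ∃ k0, k = k0 + 1 := ⟨k - 1, by omega⟩
    obtain ⟨i0, rfl⟩ : ∃ i0, i = i0 + 1 := ⟨i - 1, by omega⟩
    obtain ⟨j0, rfl⟩ : ∃ j0, j = j0 + 1 := ⟨j - 1, by omega⟩
    have := sig4_inj ⟨k0, by omega⟩ ⟨i0, by omega⟩ ⟨j0, by omega⟩ (by simp [Fin.ext_iff]; omega)
      (by simp [Fin.ext_iff]; omega) (by simpa [sigma_base] using h)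
    simp [Fin.ext_iff] at this
    omega
  | succ m ih =>
    intro k i j hk1 hkP hi1 hiP hik hj1 hjP hjk h
    simp only [show m+1+2 = m+3 from rfl] at hkP hiP hjP h ⊢
    have hP4 := pow_m2 m
    have hP8 := pow_m3 m
    by_cases hk : k ≤ 2^(m+2)
    · rcases eq_or_ne i (k + 2^(m+2)) with rfl | hfi <;>
        rcases eq_or_ne j (k + 2^(m+2)) with hfj | hfj
      · omega
      · rw [sigma_fix hk] at h
        by_cases hj : j ≤ 2^(m+2)
        · rw [sigma_low hk1 hk hj hjk] at h
          have := sig_range m k j hk1 hk hj1 hj hjk; omega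
        · rw [sigma_high hk (by omega) hfj] at h
          have := sig_range m k (j - 2^(m+2)) hk1 hk (by omega) (by omega) (by omega); omega
      · rw [hfj, sigma_fix hk] at h
        by_cases hi : i ≤ 2^(m+2)
        · rw [sigma_low hk1 hk hi hik] at h
          have := sig_range m k i hk1 hk hi1 hi hik; omega
        · rw [sigma_high hk (by omega) hfi] at h
          have := sig_range m k (i - 2^(m+2)) hk1 hk (by omega) (by omega) (by omega); omega
      · by_cases hi : i ≤ 2^(m+2) <;> by_cases hj : j ≤ 2^(m+2)
        · rw [sigma_low hk1 hk hi hik, sigma_low hk1 hk hj hjk] at h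
          exact ih k i j hk1 hk hi1 hi hik hj1 hj hjk (by omega)
        · rw [sigma_low hk1 hk hi hik, sigma_high hk (by omega) hfj] at h
          have r1 := sig_range m k i hk1 hk hi1 hi hik
          have r2 := sig_range m k (j - 2^(m+2)) hk1 hk (by omega) (by omega) (by omega); omega
        · rw [sigma_high hk (by omega) hfi, sigma_low hk1 hk hj hjk] at h
          have r1 := sig_range m k (i - 2^(m+2)) hk1 hk (by omega) (by omega) (by omega)
          have r2 := sig_range m k j hk1 hk hj1 hj hjk; omega
        · rw [sigma_high hk (by omega) hfi, sigma_high hk (by omega) hfj] at h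
          have := ih k (i - 2^(m+2)) (j - 2^(m+2)) hk1 hk (by omega) (by omega) (by omega)
            (by omega) (by omega) (by omega) h
          omega
    · rcases eq_or_ne i (k - 2^(m+2)) with hfi | hfi <;>
        rcases eq_or_ne j (k - 2^(m+2)) with hfj | hfj
      · omega
      · rw [hfi, sigma_fix' hk] at h
        by_cases hj : j ≤ 2^(m+2)
        · rw [sigma_low' hk hj hfj] at h
          have := sig_range m (k - 2^(m+2)) j (by omega) (by omega) hj1 hj hfj; omega
        · rw [sigma_high' hk (by omega) hj hjk] at h
          have := sig_range m (k - 2^(m+2)) (j - 2^(m+2)) (by omega) (by omega) (by omega)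
            (by omega) (by omega); omega
      · rw [hfj, sigma_fix' hk] at h
        by_cases hi : i ≤ 2^(m+2)
        · rw [sigma_low' hk hi hfi] at h
          have := sig_range m (k - 2^(m+2)) i (by omega) (by omega) hi1 hi hfi; omega
        · rw [sigma_high' hk (by omega) hi hik] at h
          have := sig_range m (k - 2^(m+2)) (i - 2^(m+2)) (by omega) (by omega) (by omega)
            (by omega) (by omega); omega
      · by_cases hi : i ≤ 2^(m+2) <;> by_cases hj : j ≤ 2^(m+2)
        · rw [sigma_low' hk hi hfi, sigma_low' hk hj hfj] at h
          exact ih (k - 2^(m+2)) i j (by omega) (by omega) hi1 hi hfi hj1 hj hfj (by omega)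
        · rw [sigma_low' hk hi hfi, sigma_high' hk (by omega) hj hjk] at h
          have r1 := sig_range m (k - 2^(m+2)) i (by omega) (by omega) hi1 hi hfi
          have r2 := sig_range m (k - 2^(m+2)) (j - 2^(m+2)) (by omega) (by omega) (by omega)
            (by omega) (by omega); omega
        · rw [sigma_high' hk (by omega) hi hik, sigma_low' hk hj hfj] at h
          have r1 := sig_range m (k - 2^(m+2)) (i - 2^(m+2)) (by omega) (by omega) (by omega)
            (by omega) (by omega)
          have r2 := sig_range m (k - 2^(m+2)) j (by omega) (by omega) hj1 hj hfj; omega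
        · have := ih (k - 2^(m+2)) (i - 2^(m+2)) (j - 2^(m+2)) (by omega) (by omega) (by omega)
            (by omega) (by omega) (by omega) (by omega) (by omega)
            (by rw [sigma_high' hk (by omega) hi hik, sigma_high' hk (by omega) hj hjk] at h; exact h)
          omega

end S18

namespace S18

lemma sigma_low2 {m k0 i : ℕ} (hk01 : 1 ≤ k0) (hi : i ≤ 2^(m+2)) (hik : i ≠ k0) :
    sigma (m+3) (k0 + 2^(m+2)) i = sigma (m+2) k0 i + 2^(m+2) := by
  have hk : ¬ (k0 + 2^(m+2) ≤ 2^(m+2)) := by omega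
  have e : k0 + 2^(m+2) - 2^(m+2) = k0 := by omega
  rw [sigma_low' hk hi (by omega), e]

lemma sigma_fix2 {m k0 : ℕ} (hk01 : 1 ≤ k0) : sigma (m+3) (k0 + 2^(m+2)) k0 = k0 := by
  have hk : ¬ (k0 + 2^(m+2) ≤ 2^(m+2)) := by omega
  have e : k0 + 2^(m+2) - 2^(m+2) = k0 := by omega
  have h := sigma_fix' (m := m) (k := k0 + 2^(m+2)) hk
  rwa [e] at h

lemma sigma_high2 {m k0 i : ℕ} (hk01 : 1 ≤ k0) (hkk : k0 ≤ 2^(m+2)) (hi : ¬ i ≤ 2^(m+2))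
    (hik : i ≠ k0 + 2^(m+2)) :
    sigma (m+3) (k0 + 2^(m+2)) i = sigma (m+2) k0 (i - 2^(m+2)) := by
  have hP8 := pow_m3 m
  have hP4 := pow_m2 m
  have hk : ¬ (k0 + 2^(m+2) ≤ 2^(m+2)) := by omega
  have e : k0 + 2^(m+2) - 2^(m+2) = k0 := by omega
  have h := sigma_high' hk (by omega) hi hik
  rwa [e] at h

end S18

namespace S18

lemma F1 : ∀ k a b : Fin 4, a ≠ k → b ≠ k →
    M4 ((a:ℕ)+1) ((b:ℕ)+1) = M4s (sigma4 ((k:ℕ)+1) ((a:ℕ)+1)) (sigma4 ((k:ℕ)+1) ((b:ℕ)+1))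
    ∧ ((a:ℕ) = (b:ℕ) ↔ sigma4 ((k:ℕ)+1) ((a:ℕ)+1) = sigma4 ((k:ℕ)+1) ((b:ℕ)+1)) := by decide

lemma F2 : ∀ k b : Fin 4, b ≠ k →
    M4 ((k:ℕ)+1) ((b:ℕ)+1) = -(M4s ((k:ℕ)+1) (sigma4 ((k:ℕ)+1) ((b:ℕ)+1)))
    ∧ M4 ((b:ℕ)+1) ((k:ℕ)+1) = -(M4s (sigma4 ((k:ℕ)+1) ((b:ℕ)+1)) ((k:ℕ)+1)) := by decide

lemma Q_small {i j : ℕ} (s : ℤ) (hi1 : 1 ≤ i) (hi4 : i ≤ 4) (hj1 : 1 ≤ j) (hj4 : j ≤ 4) :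
    Q s i j = (blockSC s).1 * M4 i j + (if i = j then (blockSC s).2 else 0) := by
  have e1 : (i-1)/4 = 0 := by omega
  have e2 : (j-1)/4 = 0 := by omega
  have e3 : (i-1)%4 + 1 = i := by omega
  have e4 : (j-1)%4 + 1 = j := by omega
  have e5 : ((i-1)%4 = (j-1)%4) ↔ (i = j) := by omega
  simp only [Q, e1, e2, e3, e4, Nat.cast_zero, sub_zero, zero_add, if_congr e5 rfl rfl]

lemma Qs_small {i j : ℕ} (s : ℤ) (hi1 : 1 ≤ i) (hi4 : i ≤ 4) (hj1 : 1 ≤ j) (hj4 : j ≤ 4) :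
    Qs s i j = (blockSC s).1 * M4s i j + (if i = j then -(blockSC s).2 else 0) := by
  have e1 : (i-1)/4 = 0 := by omega
  have e2 : (j-1)/4 = 0 := by omega
  have e3 : (i-1)%4 + 1 = i := by omega
  have e4 : (j-1)%4 + 1 = j := by omega
  have e5 : ((i-1)%4 = (j-1)%4) ↔ (i = j) := by omega
  simp only [Qs, e1, e2, e3, e4, Nat.cast_zero, sub_zero, zero_add, if_congr e5 rfl rfl]

lemma RB_dbl {u v : ℤ} (h : RB u v) : RB (2*u) (2*v) := by
  have := RB_mul_pow 1 h
  simpa [pow_one, mul_comm] using this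

end S18

namespace S18

lemma key : ∀ m : ℕ, ∀ k : ℕ, 1 ≤ k → k ≤ 2^(m+2) →
    ((∀ u v : ℤ, RB u v → ∀ a b : ℕ, 1 ≤ a → a ≤ 2^(m+2) → 1 ≤ b → b ≤ 2^(m+2) → a ≠ k → b ≠ k →
        Q (u * 2^m) a b = Qs (v * 2^m) (sigma (m+2) k a) (sigma (m+2) k b))
    ∧ (∀ u v : ℤ, (u + v) % 2 = 1 → ∀ b : ℕ, 1 ≤ b → b ≤ 2^(m+2) → b ≠ k →
        Q (u * 2^m) k b = Qs (v * 2^m) k (sigma (m+2) k b))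
    ∧ (∀ u v : ℤ, (u + v) % 2 = 1 → ∀ b : ℕ, 1 ≤ b → b ≤ 2^(m+2) → b ≠ k →
        Q (u * 2^m) b k = Qs (v * 2^m) (sigma (m+2) k b) k)) := by
  intro m
  induction m with
  | zero =>
    intro k hk1 hk4
    obtain ⟨k0, rfl⟩ : ∃ k0, k = k0 + 1 := ⟨k - 1, by omega⟩
    refine ⟨?_, ?_, ?_⟩
    · intro u v hR a b ha1 ha4 hb1 hb4 hak hbk
      simp only [pow_zero, mul_one] at *
      obtain ⟨a0, rfl⟩ : ∃ a0, a = a0 + 1 := ⟨a - 1, by omega⟩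
      obtain ⟨b0, rfl⟩ : ∃ b0, b = b0 + 1 := ⟨b - 1, by omega⟩
      have hra := sig4_facts ⟨k0, by omega⟩ ⟨a0, by omega⟩ (by simp [Fin.ext_iff]; omega)
      have hrb := sig4_facts ⟨k0, by omega⟩ ⟨b0, by omega⟩ (by simp [Fin.ext_iff]; omega)
      simp only at hra hrb
      have hF := F1 ⟨k0, by omega⟩ ⟨a0, by omega⟩ ⟨b0, by omega⟩
        (by simp [Fin.ext_iff]; omega) (by simp [Fin.ext_iff]; omega)
      simp only at hF
      obtain ⟨hsc1, hsc2⟩ := SC hR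
      rw [sigma_base, sigma_base,
        Q_small u (by omega) (by omega) (by omega) (by omega),
        Qs_small v (by omega) (by omega) (by omega) (by omega)]
      have hiff : (a0 + 1 = b0 + 1) ↔ (sigma4 (k0+1) (a0+1) = sigma4 (k0+1) (b0+1)) := by
        constructor
        · intro h; rw [show a0 = b0 by omega]
        · intro h; have := hF.2.mpr h; omega
      rw [hF.1, hsc1, hsc2, if_congr hiff rfl rfl]
    · intro u v hodd b hb1 hb4 hbk
      simp only [pow_zero, mul_one] at *
      obtain ⟨b0, rfl⟩ : ∃ b0, b = b0 + 1 := ⟨b - 1, by omega⟩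
      have hrb := sig4_facts ⟨k0, by omega⟩ ⟨b0, by omega⟩ (by simp [Fin.ext_iff]; omega)
      simp only at hrb
      have hF := F2 ⟨k0, by omega⟩ ⟨b0, by omega⟩ (by simp [Fin.ext_iff]; omega)
      simp only at hF
      rw [sigma_base, Q_small u (by omega) (by omega) (by omega) (by omega),
        Qs_small v (by omega) (by omega) (by omega) (by omega),
        if_neg (by omega : ¬ (k0 + 1 = b0 + 1)),
        if_neg (by omega : ¬ (k0 + 1 = sigma4 (k0+1) (b0+1))), hF.1]
      have hpar : u % 2 = 1 ∧ v % 2 = 0 ∨ u % 2 = 0 ∧ v % 2 = 1 := by omega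
      rcases hpar with ⟨h1, h2⟩ | ⟨h1, h2⟩
      · rw [blockSC_odd1 h1, blockSC_even1 h2]; ring
      · rw [blockSC_even1 h1, blockSC_odd1 h2]; ring
    · intro u v hodd b hb1 hb4 hbk
      simp only [pow_zero, mul_one] at *
      obtain ⟨b0, rfl⟩ : ∃ b0, b = b0 + 1 := ⟨b - 1, by omega⟩
      have hrb := sig4_facts ⟨k0, by omega⟩ ⟨b0, by omega⟩ (by simp [Fin.ext_iff]; omega)
      simp only at hrb
      have hF := F2 ⟨k0, by omega⟩ ⟨b0, by omega⟩ (by simp [Fin.ext_iff]; omega)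
      simp only at hF
      rw [sigma_base, Q_small u (by omega) (by omega) (by omega) (by omega),
        Qs_small v (by omega) (by omega) (by omega) (by omega),
        if_neg (by omega : ¬ (b0 + 1 = k0 + 1)),
        if_neg (by omega : ¬ (sigma4 (k0+1) (b0+1) = k0 + 1)), hF.2]
      have hpar : u % 2 = 1 ∧ v % 2 = 0 ∨ u % 2 = 0 ∧ v % 2 = 1 := by omega
      rcases hpar with ⟨h1, h2⟩ | ⟨h1, h2⟩
      · rw [blockSC_odd1 h1, blockSC_even1 h2]; ring
      · rw [blockSC_even1 h1, blockSC_odd1 h2]; ring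
  | succ m IH =>
    intro k hk1 hk2
    simp only [show m+1+2 = m+3 from rfl] at hk2 ⊢
    have hP4 := pow_m2 m
    have hP8 := pow_m3 m
    have c0 : ∀ w : ℤ, w * 2^(m+1) = (2*w) * 2^m := fun w => by rw [pow_succ]; ring
    have cp : ∀ w : ℤ, w * 2^(m+1) + ((2^m:ℕ):ℤ) = (2*w+1) * 2^m := fun w => by
      push_cast [pow_succ]; ring
    have cm : ∀ w : ℤ, w * 2^(m+1) - ((2^m:ℕ):ℤ) = (2*w-1) * 2^m := fun w => by
      push_cast [pow_succ]; ring
    have cpm : ∀ w : ℤ, w * 2^(m+1) + ((2^m:ℕ):ℤ) - ((2^m:ℕ):ℤ) = (2*w) * 2^m := fun w => by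
      push_cast [pow_succ]; ring
    by_cases hk : k ≤ 2^(m+2)
    · -- k in lower half
      obtain ⟨L1, L2, L3⟩ := IH k hk1 hk
      refine ⟨?_, ?_, ?_⟩
      · -- part L
        intro u v hR a b ha1 ha2 hb1 hb2 hak hbk
        have h4 := RB_sum4 hR
        by_cases haP : a ≤ 2^(m+2)
        · have hsa := sig_range m k a hk1 hk ha1 haP hak
          by_cases hbP : b ≤ 2^(m+2)
          · -- A
            have hsb := sig_range m k b hk1 hk hb1 hbP hbk
            rw [sigma_low hk1 hk haP hak, sigma_low hk1 hk hbP hbk, hP4,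
              Qs_shr _ _ _ _ hsb.1, Qs_shl _ _ _ _ hsa.1, cpm v, c0 u]
            exact L1 _ _ (RB_dbl hR) a b ha1 haP hb1 hbP hak hbk
          · by_cases hbf : b = k + 2^(m+2)
            · -- C
              subst hbf
              rw [sigma_low hk1 hk haP hak, sigma_fix hk, hP4,
                Q_shr _ _ _ _ hk1, Qs_shr _ _ _ _ hk1, Qs_shl _ _ _ _ hsa.1, cp u, cpm v]
              exact L3 _ _ (by omega) a ha1 haP hak
            · -- B
              obtain ⟨b0, rfl⟩ : ∃ b0, b = b0 + 4*2^m := ⟨b - 4*2^m, by omega⟩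
              have hb01 : 1 ≤ b0 := by omega
              have hb0P : b0 ≤ 2^(m+2) := by omega
              have hb0k : b0 ≠ k := by omega
              have hsb := sig_range m k b0 hk1 hk hb01 hb0P hb0k
              rw [sigma_low hk1 hk haP hak, sigma_high hk (by omega) hbf,
                show b0 + 4*2^m - 2^(m+2) = b0 from by omega, hP4,
                Q_shr _ _ _ _ hb01, Qs_shl _ _ _ _ hsa.1, cp u, cm v]
              exact L1 _ _ (RB_odd (by omega) (by omega) (by omega)) a b0
                ha1 haP hb01 hb0P hak hb0k
        · by_cases haf : a = k + 2^(m+2)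
          · subst haf
            by_cases hbP : b ≤ 2^(m+2)
            · -- G
              have hsb := sig_range m k b hk1 hk hb1 hbP hbk
              rw [sigma_fix hk, sigma_low hk1 hk hbP hbk, hP4,
                Q_shl _ _ _ _ hk1, Qs_shr _ _ _ _ hsb.1, Qs_shl _ _ _ _ hk1, cm u, cpm v]
              exact L2 _ _ (by omega) b hb1 hbP hbk
            · by_cases hbf : b = k + 2^(m+2)
              · -- I
                subst hbf
                rw [sigma_fix hk, Q_diag, Qs_diag]
                exact (SC (RB_mul_pow (m+1) hR)).2
              · -- H
                obtain ⟨b0, rfl⟩ : ∃ b0, b = b0 + 4*2^m := ⟨b - 4*2^m, by omega⟩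
                have hb01 : 1 ≤ b0 := by omega
                have hb0P : b0 ≤ 2^(m+2) := by omega
                have hb0k : b0 ≠ k := by omega
                have hsb := sig_range m k b0 hk1 hk hb01 hb0P hb0k
                rw [sigma_fix hk, sigma_high hk (by omega) hbf,
                  show b0 + 4*2^m - 2^(m+2) = b0 from by omega, hP4,
                  Q_shr _ _ _ _ hb01, Q_shl _ _ _ _ hk1, Qs_shl _ _ _ _ hk1,
                  show u * 2^(m+1) + ((2^m:ℕ):ℤ) - ((2^m:ℕ):ℤ) = (2*u) * 2^m from cpm u, cm v]
                exact L2 _ _ (by omega) b0 hb01 hb0P hb0k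
          · -- a high, not fixed
            obtain ⟨a0, rfl⟩ : ∃ a0, a = a0 + 4*2^m := ⟨a - 4*2^m, by omega⟩
            have ha01 : 1 ≤ a0 := by omega
            have ha0P : a0 ≤ 2^(m+2) := by omega
            have ha0k : a0 ≠ k := by omega
            have hsa := sig_range m k a0 hk1 hk ha01 ha0P ha0k
            by_cases hbP : b ≤ 2^(m+2)
            · -- D
              have hsb := sig_range m k b hk1 hk hb1 hbP hbk
              rw [sigma_high hk (by omega) haf,
                show a0 + 4*2^m - 2^(m+2) = a0 from by omega,
                sigma_low hk1 hk hbP hbk, hP4,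
                Q_shl _ _ _ _ ha01, Qs_shr _ _ _ _ hsb.1, cm u, cp v]
              exact L1 _ _ (RB_odd (by omega) (by omega) (by omega)) a0 b
                ha01 ha0P hb1 hbP ha0k hbk
            · by_cases hbf : b = k + 2^(m+2)
              · -- F
                subst hbf
                rw [sigma_high hk (by omega) haf,
                  show a0 + 4*2^m - 2^(m+2) = a0 from by omega,
                  sigma_fix hk, hP4,
                  Q_shr _ _ _ _ hk1, Q_shl _ _ _ _ ha01, Qs_shr _ _ _ _ hk1,
                  show u * 2^(m+1) + ((2^m:ℕ):ℤ) - ((2^m:ℕ):ℤ) = (2*u) * 2^m from cpm u, cp v]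
                exact L3 _ _ (by omega) a0 ha01 ha0P ha0k
              · -- E
                obtain ⟨b0, rfl⟩ : ∃ b0, b = b0 + 4*2^m := ⟨b - 4*2^m, by omega⟩
                have hb01 : 1 ≤ b0 := by omega
                have hb0P : b0 ≤ 2^(m+2) := by omega
                have hb0k : b0 ≠ k := by omega
                rw [sigma_high hk (by omega) haf,
                  show a0 + 4*2^m - 2^(m+2) = a0 from by omega,
                  sigma_high hk (by omega) hbf,
                  show b0 + 4*2^m - 2^(m+2) = b0 from by omega,
                  Q_shr _ _ _ _ hb01, Q_shl _ _ _ _ ha01,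
                  show u * 2^(m+1) + ((2^m:ℕ):ℤ) - ((2^m:ℕ):ℤ) = (2*u) * 2^m from cpm u, c0 v]
                exact L1 _ _ (RB_dbl hR) a0 b0 ha01 ha0P hb01 hb0P ha0k hb0k
      · -- part L2
        intro u v hodd b hb1 hb2 hbk
        by_cases hbP : b ≤ 2^(m+2)
        · -- a)
          have hsb := sig_range m k b hk1 hk hb1 hbP hbk
          rw [sigma_low hk1 hk hbP hbk, hP4, Qs_shr _ _ _ _ hsb.1, c0 u, cp v]
          exact L2 _ _ (by omega) b hb1 hbP hbk
        · by_cases hbf : b = k + 2^(m+2)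
          · -- c)
            subst hbf
            rw [sigma_fix hk, hP4, Q_shr _ _ _ _ hk1, Qs_shr _ _ _ _ hk1, cp u, cp v,
              Q_diag, Qs_diag]
            exact (SC (RB_mul_pow m (RB_odd (by omega) (by omega) (by omega)))).2
          · -- b)
            obtain ⟨b0, rfl⟩ : ∃ b0, b = b0 + 4*2^m := ⟨b - 4*2^m, by omega⟩
            have hb01 : 1 ≤ b0 := by omega
            have hb0P : b0 ≤ 2^(m+2) := by omega
            have hb0k : b0 ≠ k := by omega
            rw [sigma_high hk (by omega) hbf,
              show b0 + 4*2^m - 2^(m+2) = b0 from by omega,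
              Q_shr _ _ _ _ hb01, cp u, c0 v]
            exact L2 _ _ (by omega) b0 hb01 hb0P hb0k
      · -- part L3
        intro u v hodd b hb1 hb2 hbk
        by_cases hbP : b ≤ 2^(m+2)
        · -- a)
          have hsb := sig_range m k b hk1 hk hb1 hbP hbk
          rw [sigma_low hk1 hk hbP hbk, hP4, Qs_shl _ _ _ _ hsb.1, c0 u, cm v]
          exact L3 _ _ (by omega) b hb1 hbP hbk
        · by_cases hbf : b = k + 2^(m+2)
          · -- c)
            subst hbf
            rw [sigma_fix hk, hP4, Q_shl _ _ _ _ hk1, Qs_shl _ _ _ _ hk1, cm u, cm v,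
              Q_diag, Qs_diag]
            exact (SC (RB_mul_pow m (RB_odd (by omega) (by omega) (by omega)))).2
          · -- b)
            obtain ⟨b0, rfl⟩ : ∃ b0, b = b0 + 4*2^m := ⟨b - 4*2^m, by omega⟩
            have hb01 : 1 ≤ b0 := by omega
            have hb0P : b0 ≤ 2^(m+2) := by omega
            have hb0k : b0 ≠ k := by omega
            rw [sigma_high hk (by omega) hbf,
              show b0 + 4*2^m - 2^(m+2) = b0 from by omega,
              Q_shl _ _ _ _ hb01, cm u, c0 v]
            exact L3 _ _ (by omega) b0 hb01 hb0P hb0k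
    · -- k in upper half
      obtain ⟨k0, rfl⟩ : ∃ k0, k = k0 + 2^(m+2) := ⟨k - 2^(m+2), by omega⟩
      have hk01 : 1 ≤ k0 := by omega
      have hk0P : k0 ≤ 2^(m+2) := by omega
      obtain ⟨L1, L2, L3⟩ := IH k0 hk01 hk0P
      refine ⟨?_, ?_, ?_⟩
      · -- part L
        intro u v hR a b ha1 ha2 hb1 hb2 hak hbk
        have h4 := RB_sum4 hR
        by_cases haP : a ≤ 2^(m+2)
        · by_cases haf : a = k0
          · by_cases hbP : b ≤ 2^(m+2)
            · by_cases hbf : b = k0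
              · -- I'
                rw [haf, hbf, sigma_fix2 hk01, Q_diag, Qs_diag]
                exact (SC (RB_mul_pow (m+1) hR)).2
              · -- G'
                have hsb := sig_range m k0 b hk01 hk0P hb1 hbP hbf
                rw [haf, sigma_fix2 hk01, sigma_low2 hk01 hbP hbf, hP4,
                  Qs_shr _ _ _ _ hsb.1, c0 u, cp v]
                exact L2 _ _ (by omega) b hb1 hbP hbf
            · -- H'
              obtain ⟨b0, rfl⟩ : ∃ b0, b = b0 + 4*2^m := ⟨b - 4*2^m, by omega⟩
              have hb01 : 1 ≤ b0 := by omega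
              have hb0P : b0 ≤ 2^(m+2) := by omega
              have hb0k : b0 ≠ k0 := by omega
              rw [haf, sigma_fix2 hk01, sigma_high2 hk01 hk0P (by omega) hbk,
                show b0 + 4*2^m - 2^(m+2) = b0 from by omega,
                Q_shr _ _ _ _ hb01, cp u, c0 v]
              exact L2 _ _ (by omega) b0 hb01 hb0P hb0k
          · have hsa := sig_range m k0 a hk01 hk0P ha1 haP haf
            by_cases hbP : b ≤ 2^(m+2)
            · by_cases hbf : b = k0
              · -- C'
                rw [hbf, sigma_low2 hk01 haP haf, sigma_fix2 hk01, hP4,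
                  Qs_shl _ _ _ _ hsa.1, c0 u, cm v]
                exact L3 _ _ (by omega) a ha1 haP haf
              · -- A'
                have hsb := sig_range m k0 b hk01 hk0P hb1 hbP hbf
                rw [sigma_low2 hk01 haP haf, sigma_low2 hk01 hbP hbf, hP4,
                  Qs_shr _ _ _ _ hsb.1, Qs_shl _ _ _ _ hsa.1, cpm v, c0 u]
                exact L1 _ _ (RB_dbl hR) a b ha1 haP hb1 hbP haf hbf
            · -- B'
              obtain ⟨b0, rfl⟩ : ∃ b0, b = b0 + 4*2^m := ⟨b - 4*2^m, by omega⟩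
              have hb01 : 1 ≤ b0 := by omega
              have hb0P : b0 ≤ 2^(m+2) := by omega
              have hb0k : b0 ≠ k0 := by omega
              rw [sigma_low2 hk01 haP haf, sigma_high2 hk01 hk0P (by omega) hbk,
                show b0 + 4*2^m - 2^(m+2) = b0 from by omega, hP4,
                Q_shr _ _ _ _ hb01, Qs_shl _ _ _ _ hsa.1, cp u, cm v]
              exact L1 _ _ (RB_odd (by omega) (by omega) (by omega)) a b0
                ha1 haP hb01 hb0P haf hb0k
        · -- a high
          obtain ⟨a0, rfl⟩ : ∃ a0, a = a0 + 4*2^m := ⟨a - 4*2^m, by omega⟩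
          have ha01 : 1 ≤ a0 := by omega
          have ha0P : a0 ≤ 2^(m+2) := by omega
          have ha0k : a0 ≠ k0 := by omega
          have hsa := sig_range m k0 a0 hk01 hk0P ha01 ha0P ha0k
          by_cases hbP : b ≤ 2^(m+2)
          · by_cases hbf : b = k0
            · -- F'
              rw [hbf, sigma_high2 hk01 hk0P (by omega) hak,
                show a0 + 4*2^m - 2^(m+2) = a0 from by omega,
                sigma_fix2 hk01, Q_shl _ _ _ _ ha01, cm u, c0 v]
              exact L3 _ _ (by omega) a0 ha01 ha0P ha0k
            · -- D'
              have hsb := sig_range m k0 b hk01 hk0P hb1 hbP hbf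
              rw [sigma_high2 hk01 hk0P (by omega) hak,
                show a0 + 4*2^m - 2^(m+2) = a0 from by omega,
                sigma_low2 hk01 hbP hbf, hP4,
                Q_shl _ _ _ _ ha01, Qs_shr _ _ _ _ hsb.1, cm u, cp v]
              exact L1 _ _ (RB_odd (by omega) (by omega) (by omega)) a0 b
                ha01 ha0P hb1 hbP ha0k hbf
          · -- E'
            obtain ⟨b0, rfl⟩ : ∃ b0, b = b0 + 4*2^m := ⟨b - 4*2^m, by omega⟩
            have hb01 : 1 ≤ b0 := by omega
            have hb0P : b0 ≤ 2^(m+2) := by omega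
            have hb0k : b0 ≠ k0 := by omega
            rw [sigma_high2 hk01 hk0P (by omega) hak,
              show a0 + 4*2^m - 2^(m+2) = a0 from by omega,
              sigma_high2 hk01 hk0P (by omega) hbk,
              show b0 + 4*2^m - 2^(m+2) = b0 from by omega,
              Q_shr _ _ _ _ hb01, Q_shl _ _ _ _ ha01,
              show u * 2^(m+1) + ((2^m:ℕ):ℤ) - ((2^m:ℕ):ℤ) = (2*u) * 2^m from cpm u, c0 v]
            exact L1 _ _ (RB_dbl hR) a0 b0 ha01 ha0P hb01 hb0P ha0k hb0k
      · -- part L2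
        intro u v hodd b hb1 hb2 hbk
        by_cases hbP : b ≤ 2^(m+2)
        · by_cases hbf : b = k0
          · -- e)
            rw [hbf, sigma_fix2 hk01, hP4, Q_shl _ _ _ _ hk01, Qs_shl _ _ _ _ hk01, cm u, cm v,
              Q_diag, Qs_diag]
            exact (SC (RB_mul_pow m (RB_odd (by omega) (by omega) (by omega)))).2
          · -- d)
            have hsb := sig_range m k0 b hk01 hk0P hb1 hbP hbf
            rw [sigma_low2 hk01 hbP hbf, hP4, Q_shl _ _ _ _ hk01,
              Qs_shr _ _ _ _ hsb.1, Qs_shl _ _ _ _ hk01, cm u, cpm v]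
            exact L2 _ _ (by omega) b hb1 hbP hbf
        · -- f)
          obtain ⟨b0, rfl⟩ : ∃ b0, b = b0 + 4*2^m := ⟨b - 4*2^m, by omega⟩
          have hb01 : 1 ≤ b0 := by omega
          have hb0P : b0 ≤ 2^(m+2) := by omega
          have hb0k : b0 ≠ k0 := by omega
          rw [sigma_high2 hk01 hk0P (by omega) hbk,
            show b0 + 4*2^m - 2^(m+2) = b0 from by omega, hP4,
            Q_shr _ _ _ _ hb01, Q_shl _ _ _ _ hk01, Qs_shl _ _ _ _ hk01,
            show u * 2^(m+1) + ((2^m:ℕ):ℤ) - ((2^m:ℕ):ℤ) = (2*u) * 2^m from cpm u, cm v]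
          exact L2 _ _ (by omega) b0 hb01 hb0P hb0k
      · -- part L3
        intro u v hodd b hb1 hb2 hbk
        by_cases hbP : b ≤ 2^(m+2)
        · by_cases hbf : b = k0
          · -- e)
            rw [hbf, sigma_fix2 hk01, hP4, Q_shr _ _ _ _ hk01, Qs_shr _ _ _ _ hk01, cp u, cp v,
              Q_diag, Qs_diag]
            exact (SC (RB_mul_pow m (RB_odd (by omega) (by omega) (by omega)))).2
          · -- d)
            have hsb := sig_range m k0 b hk01 hk0P hb1 hbP hbf
            rw [sigma_low2 hk01 hbP hbf, hP4, Q_shr _ _ _ _ hk01,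
              Qs_shr _ _ _ _ hk01, Qs_shl _ _ _ _ hsb.1, cp u, cpm v]
            exact L3 _ _ (by omega) b hb1 hbP hbf
        · -- f)
          obtain ⟨b0, rfl⟩ : ∃ b0, b = b0 + 4*2^m := ⟨b - 4*2^m, by omega⟩
          have hb01 : 1 ≤ b0 := by omega
          have hb0P : b0 ≤ 2^(m+2) := by omega
          have hb0k : b0 ≠ k0 := by omega
          rw [sigma_high2 hk01 hk0P (by omega) hbk,
            show b0 + 4*2^m - 2^(m+2) = b0 from by omega, hP4,
            Q_shr _ _ _ _ hk01, Q_shl _ _ _ _ hb01, Qs_shr _ _ _ _ hk01,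
            show u * 2^(m+1) + ((2^m:ℕ):ℤ) - ((2^m:ℕ):ℤ) = (2*u) * 2^m from cpm u, cp v]
          exact L3 _ _ (by omega) b0 hb01 hb0P hb0k

end S18

/-- For each `p = 2^n` with `n ≥ 2` and any `f : ℤ → {0,1}`, the
digraphs `D`, `D*` with adjacency matrices `(f(M_p[i,j]))`, `(f(M_p*[i,j]))` are
hypomorphic: for each `k` from 1 to `p`, `σ_{p,k}` is an isomorphism of `D − k`
onto `D* − k`. -/
theorem stmt18 (n p : ℕ) (hn : 2 ≤ n) (hp : p = 2^n) (f : ℤ → Fin 2)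
    (k : ℕ) (hk1 : 1 ≤ k) (hk2 : k ≤ p) :
    Set.BijOn (sigma n k) (Set.Icc 1 p \ {k}) (Set.Icc 1 p \ {k}) ∧
    ∀ i ∈ Set.Icc 1 p, ∀ j ∈ Set.Icc 1 p, i ≠ k → j ≠ k →
      f (Mp n i j) = f (Mps n (sigma n k i) (sigma n k j)) := by
  obtain ⟨m, rfl⟩ : ∃ m, n = m + 2 := ⟨n - 2, by omega⟩
  subst hp
  constructor
  · have hmap : Set.MapsTo (sigma (m+2) k) (Set.Icc 1 (2^(m+2)) \ {k})
        (Set.Icc 1 (2^(m+2)) \ {k}) := by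
      intro i hi
      simp only [Set.mem_diff, Set.mem_Icc, Set.mem_singleton_iff] at hi ⊢
      have h := S18.sig_range m k i hk1 hk2 hi.1.1 hi.1.2 hi.2
      exact ⟨⟨h.1, h.2.1⟩, h.2.2⟩
    have hfin : (Set.Icc 1 (2^(m+2)) \ {k} : Set ℕ).Finite :=
      (Set.finite_Icc 1 (2^(m+2))).subset Set.diff_subset
    refine (hfin.injOn_iff_bijOn_of_mapsTo hmap).1 ?_
    intro i hi j hj hij
    simp only [Set.mem_diff, Set.mem_Icc, Set.mem_singleton_iff] at hi hj
    exact S18.sig_inj m k i j hk1 hk2 hi.1.1 hi.1.2 hi.2 hj.1.1 hj.1.2 hj.2 hij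
  · intro i hi j hj hik hjk
    simp only [Set.mem_Icc] at hi hj
    have hsi := S18.sig_range m k i hk1 hk2 hi.1 hi.2 hik
    have hsj := S18.sig_range m k j hk1 hk2 hj.1 hj.2 hjk
    have hkey := (S18.key m k hk1 hk2).1 0 0 S18.RB_zero i j hi.1 hi.2 hj.1 hj.2 hik hjk
    simp only [zero_mul] at hkey
    congr 1
    rw [Mp, if_pos ⟨hi.1, hi.2, hj.1, hj.2⟩, Mps, if_pos ⟨hsi.1, hsi.2.1, hsj.1, hsj.2.1⟩,
      S18.Ment_eq, S18.Ments_eq]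
    exact hkey
end
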